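/- arXiv:1806.11233 — 4 statements merged into one kernel-verified Lean document; each statement's English description precedes it below -/
import Mathlib

section
/- The back symmetric formal power series ring equals the tensor product $\Lambda \otimes \mathbb{Q}[x]$: if $f$ is a formal power series of bounded total degree in variables $x_i$ ($i \in \mathbb{Z}$), with variables of support bounded above, and there exists $b \in \mathbb{Z}$ such that $s_i(f) = f$ for all $i < b$, then $f$ lies in the subalgebra generated by the symmetric functions in $(x_0, x_{-1}, x_{-2}, \ldots)$ together with the individual variables $x_i$, $i \in \mathbb{Z}$; and conversely every such element is back symmetric. -/
/-- `f` has bounded total degree. -/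
def BddDeg (f : MvPowerSeries ℤ ℚ) : Prop :=
  ∃ M : ℕ, ∀ m : ℤ →₀ ℕ, MvPowerSeries.coeff m f ≠ 0 → (m.sum fun _ k => k) ≤ M

/-- The variables appearing in `f` are bounded above. -/
def SuppBddAbove (f : MvPowerSeries ℤ ℚ) : Prop :=
  ∃ N : ℤ, ∀ m : ℤ →₀ ℕ, MvPowerSeries.coeff m f ≠ 0 → ∀ i : ℤ, N < i → m i = 0

/-- The action of a permutation of `ℤ` on `MvPowerSeries ℤ ℚ` by permuting
variables. -/
noncomputable def permSeries (w : Equiv.Perm ℤ) (f : MvPowerSeries ℤ ℚ) :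
    MvPowerSeries ℤ ℚ :=
  fun m => MvPowerSeries.coeff (Finsupp.equivMapDomain w m) f

/-- `f` is back symmetric: `s_i f = f` for all sufficiently negative `i`. -/
def BackSym (f : MvPowerSeries ℤ ℚ) : Prop :=
  ∃ b : ℤ, ∀ i : ℤ, i < b → permSeries (Equiv.swap i (i + 1)) f = f

/-- The set of symmetric functions in the nonpositive variables `x_0, x_{-1}, …`:
power series of bounded degree, involving only nonpositive variables, invariant
under every finitely supported permutation of `ℤ` fixing the positive integers. -/
def SymmNonpos : Set (MvPowerSeries ℤ ℚ) :=
  {g | BddDeg g ∧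
    (∀ m : ℤ →₀ ℕ, MvPowerSeries.coeff m g ≠ 0 → ∀ i : ℤ, 0 < i → m i = 0) ∧
    (∀ w : Equiv.Perm ℤ, ({i : ℤ | w i ≠ i}).Finite → (∀ i : ℤ, 0 < i → w i = i) →
      permSeries w g = g)}

/-!
A back symmetric `f` is invariant under every transposition of two variables `x_i, x_j` with
`i, j ≤ b`, for some `b ≤ 0`, since adjacent transpositions generate these. Splitting each
monomial into its variables `≤ b` and `> b` writes `f = ∑_α x^α c_α`, where `α` runs over the
finitely many exponents in the variables `b < i ≤ N` of degree at most `deg f`, and each `c_α`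
is a symmetric series of bounded degree in the variables `x_i`, `i ≤ b`. The coefficients of
such a series depend only on the partition formed by the nonzero exponents, so `c_α` is a finite
combination of monomial symmetric functions `m_λ(x_{≤ b})`. Finally
`m_λ(x_{≤ b+1}) = m_λ(x_{≤ b}) + ∑_k x_{b+1}^k m_{λ - k}(x_{≤ b})`, so by induction on `λ`
one descends from `m_λ(x_{≤ 0}) ∈ Λ` to every `b ≤ 0`.

Conversely, bounded degree, bounded support and back symmetry are each preserved by sums and
products, and hold for the generators.
-/

open MvPowerSeries Finsupp

lemma coeff_permSeries (w : Equiv.Perm ℤ) (f : MvPowerSeries ℤ ℚ) (m : ℤ →₀ ℕ) :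
    coeff m (permSeries w f) = coeff (equivMapDomain w m) f := rfl

lemma permSeries_eq_rename (w : Equiv.Perm ℤ) (f : MvPowerSeries ℤ ℚ) :
    permSeries w f = rename w.symm f := by
  ext m
  have : m = embDomain w.symm.toEmbedding (equivMapDomain w m) := by
    ext i; simp [embDomain_eq_mapDomain, ← equivMapDomain_eq_mapDomain, equivMapDomain_apply]
  conv_rhs => rw [this]
  exact (coeff_embDomain_rename w.symm.toEmbedding f _).symm

lemma permSeries_X (w : Equiv.Perm ℤ) (i : ℤ) :
    permSeries w (X i : MvPowerSeries ℤ ℚ) = X (w.symm i) := by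
  rw [permSeries_eq_rename, rename_X]

lemma permSeries_one (f : MvPowerSeries ℤ ℚ) : permSeries 1 f = f := by
  rw [permSeries_eq_rename]
  exact rename_id_apply f

lemma permSeries_permSeries (u v : Equiv.Perm ℤ) (f : MvPowerSeries ℤ ℚ) :
    permSeries v (permSeries u f) = permSeries (u * v) f := by
  simp only [permSeries_eq_rename, rename_rename]
  rfl

lemma permSeries_mul (w : Equiv.Perm ℤ) (f g : MvPowerSeries ℤ ℚ) :
    permSeries w (f * g) = permSeries w f * permSeries w g := by
  simp only [permSeries_eq_rename, map_mul]

lemma permSeries_add (w : Equiv.Perm ℤ) (f g : MvPowerSeries ℤ ℚ) :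
    permSeries w (f + g) = permSeries w f + permSeries w g := by
  simp only [permSeries_eq_rename, map_add]

lemma permSeries_algebraMap (w : Equiv.Perm ℤ) (r : ℚ) :
    permSeries w (algebraMap ℚ _ r) = algebraMap ℚ _ r := by
  rw [permSeries_eq_rename, AlgHom.commutes]

def permStabilizer (f : MvPowerSeries ℤ ℚ) : Submonoid (Equiv.Perm ℤ) where
  carrier := {w | permSeries w f = f}
  one_mem' := permSeries_one f
  mul_mem' {u v} (hu : permSeries u f = f) (hv : permSeries v f = f) := by
    rw [Set.mem_ofPred_eq, ← permSeries_permSeries, hu, hv]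

def IsSymmBelow (b : ℤ) (f : MvPowerSeries ℤ ℚ) : Prop :=
  ∀ i j, i ≤ b → j ≤ b → permSeries (Equiv.swap i j) f = f

lemma BackSym.exists_isSymmBelow {f : MvPowerSeries ℤ ℚ} (hf : BackSym f) :
    ∃ b ≤ 0, IsSymmBelow b f := by
  obtain ⟨b₀, hb₀⟩ := hf
  refine ⟨min b₀ 0, min_le_right _ _, ?_⟩
  have hlt : ∀ i j, i < j → j ≤ min b₀ 0 → Equiv.swap i j ∈ permStabilizer f := by
    intro i j hij
    induction j, hij using Int.leInduction with
    | base => exact fun h => hb₀ i (by omega)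
    | succ j hij ih =>
      exact fun h => SubmonoidClass.swap_mem_trans _ (ih (by omega)) (hb₀ j (by omega))
  intro i j hi hj
  rcases lt_trichotomy i j with h | rfl | h
  · exact hlt i j h hj
  · rw [Equiv.swap_self]; exact permSeries_one f
  · rw [Equiv.swap_comm]; exact hlt j i h hi

lemma IsSymmBelow.coeff_equivMapDomain_swap {b : ℤ} {f : MvPowerSeries ℤ ℚ}
    (hf : IsSymmBelow b f) {i j : ℤ} (hi : i ≤ b) (hj : j ≤ b) (m : ℤ →₀ ℕ) :
    coeff (equivMapDomain (Equiv.swap i j) m) f = coeff m f := by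
  rw [← coeff_permSeries, hf i j hi hj]

lemma mem_supported_Iic {b : ℤ} {m : ℤ →₀ ℕ} :
    m ∈ supported ℕ ℕ (Set.Iic b) ↔ ∀ i, b < i → m i = 0 := by
  simp [mem_supported', not_le]

lemma equivMapDomain_mem_supported_Iic {b : ℤ} {w : Equiv.Perm ℤ} (hw : ∀ i, b < i → w i = i)
    {m : ℤ →₀ ℕ} : equivMapDomain w m ∈ supported ℕ ℕ (Set.Iic b) ↔
      m ∈ supported ℕ ℕ (Set.Iic b) := by
  have hw' : ∀ i, b < i → w.symm i = i := fun i hi => w.symm_apply_eq.2 (hw i hi).symm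
  simp only [mem_supported_Iic, equivMapDomain_apply]
  exact forall₂_congr fun i hi => by rw [hw' i hi]

lemma swap_apply_of_le_lt {b i j k : ℤ} (hi : i ≤ b) (hj : j ≤ b) (hk : b < k) :
    Equiv.swap i j k = k :=
  Equiv.swap_apply_of_ne_of_ne (by omega) (by omega)

def shape {α : Type*} (m : α →₀ ℕ) : Multiset ℕ := m.support.val.map m

section shape

variable {α : Type*}

lemma shape_equivMapDomain (w : α ≃ α) (m : α →₀ ℕ) : shape (equivMapDomain w m) = shape m := by
  change (m.support.map w.toEmbedding).val.map _ = _
  simp [shape, Finset.map_val, Multiset.map_map, Function.comp_def]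

lemma sum_shape (m : α →₀ ℕ) : (shape m).sum = degree m := by
  rw [shape, degree_apply, Finset.sum_eq_multiset_sum]

lemma exists_apply_eq_of_mem_shape {m : α →₀ ℕ} {v : ℕ} (hv : v ∈ shape m) :
    ∃ j, m j = v ∧ v ≠ 0 := by
  obtain ⟨j, hj, rfl⟩ := Multiset.mem_map.1 hv
  exact ⟨j, rfl, mem_support_iff.1 hj⟩

lemma shape_eq_zero_iff {m : α →₀ ℕ} : shape m = 0 ↔ m = 0 := by
  simp [shape]

lemma shape_eq_cons_erase {m : α →₀ ℕ} {j : α} (hj : m j ≠ 0) :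
    shape m = m j ::ₘ shape (m.erase j) := by
  classical
  have hj' : j ∉ m.support.erase j := Finset.notMem_erase j _
  rw [shape, shape, support_erase, ← Finset.insert_erase (mem_support_iff.2 hj),
    Finset.insert_val_of_notMem hj', Multiset.map_cons, Finset.erase_insert hj']
  congr 1
  exact Multiset.map_congr rfl fun i hi => (erase_ne (ne_of_mem_of_not_mem hi hj')).symm

lemma shape_add_single {m : α →₀ ℕ} {j : α} (hj : m j = 0) {k : ℕ} (hk : k ≠ 0) :
    shape (m + single j k) = k ::ₘ shape m := by
  have hjk : (m + single j k) j = k := by simp [hj]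
  rw [shape_eq_cons_erase (hjk ▸ hk), hjk]
  congr 2
  ext i
  rcases eq_or_ne i j with rfl | hi
  · simp [hj]
  · simp [erase_ne hi]

end shape

open Classical in
/-- The coefficient of `x^α` when `f` is viewed as a series in the variables `x_i`, `i > b`, with
coefficients series in the variables `x_i`, `i ≤ b`. -/
noncomputable def coeffAbove (b : ℤ) (α : ℤ →₀ ℕ) (f : MvPowerSeries ℤ ℚ) :
    MvPowerSeries ℤ ℚ :=
  fun m => if m ∈ supported ℕ ℕ (Set.Iic b) then coeff (m + α) f else 0

open Classical in
lemma coeff_coeffAbove (b : ℤ) (α m : ℤ →₀ ℕ) (f : MvPowerSeries ℤ ℚ) :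
    coeff m (coeffAbove b α f) =
      if m ∈ supported ℕ ℕ (Set.Iic b) then coeff (m + α) f else 0 := rfl

lemma mem_supported_Iic_of_coeff_coeffAbove_ne_zero {b : ℤ} {α m : ℤ →₀ ℕ}
    {f : MvPowerSeries ℤ ℚ} (h : coeff m (coeffAbove b α f) ≠ 0) :
    m ∈ supported ℕ ℕ (Set.Iic b) := by
  by_contra hm
  exact h (if_neg hm)

lemma coeff_monomial_mul_coeffAbove {b : ℤ} {α : ℤ →₀ ℕ} (hα : ∀ i ≤ b, α i = 0)
    (f : MvPowerSeries ℤ ℚ) (m : ℤ →₀ ℕ) :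
    coeff m (monomial α 1 * coeffAbove b α f) =
      if α = m.filter (b < ·) then coeff m f else 0 := by
  classical
  rw [coeff_monomial_mul, coeff_coeffAbove, one_mul]
  have key : (α ≤ m ∧ m - α ∈ supported ℕ ℕ (Set.Iic b)) ↔ α = m.filter (b < ·) := by
    simp only [mem_supported_Iic, Finsupp.le_def, Finsupp.ext_iff, filter_apply, tsub_apply]
    refine ⟨fun ⟨hle, hsub⟩ i => ?_, fun h => ⟨fun i => ?_, fun i hi => ?_⟩⟩
    · split_ifs with hi
      · have := hle i; have := hsub i hi; omega
      · exact hα i (by omega)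
    · rw [h i]; split_ifs <;> omega
    · rw [h i, if_pos hi]; omega
  by_cases h : α = m.filter (b < ·)
  · rw [if_pos (key.2 h).1, if_pos (key.2 h).2, if_pos h, tsub_add_cancel_of_le (key.2 h).1]
  · rw [if_neg h]
    split_ifs with h1 h2
    · exact absurd (key.1 ⟨h1, h2⟩) h
    all_goals rfl

lemma eq_sum_monomial_mul_coeffAbove (f : MvPowerSeries ℤ ℚ) (b : ℤ) (S : Finset (ℤ →₀ ℕ))
    (hS : ∀ α ∈ S, ∀ i ≤ b, α i = 0)
    (hf : ∀ m, coeff m f ≠ 0 → m.filter (b < ·) ∈ S) :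
    f = ∑ α ∈ S, monomial α 1 * coeffAbove b α f := by
  ext m
  rw [map_sum, Finset.sum_congr rfl fun α hα => coeff_monomial_mul_coeffAbove (hS α hα) f m,
    Finset.sum_ite_eq']
  split_ifs with h
  · rfl
  · exact not_not.1 (mt (hf m) h)

lemma IsSymmBelow.isSymmBelow_coeffAbove {b b' : ℤ} {f : MvPowerSeries ℤ ℚ}
    (hf : IsSymmBelow b f) (hb : b' ≤ b) {α : ℤ →₀ ℕ} (hα : ∀ i ≤ b', α i = 0) :
    IsSymmBelow b' (coeffAbove b' α f) := by
  intro i j hi hj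
  have hfix : ∀ k, b' < k → Equiv.swap i j k = k := fun k => swap_apply_of_le_lt hi hj
  ext m
  have hαw : equivMapDomain (Equiv.swap i j) α = α := by
    ext k
    rw [equivMapDomain_apply, Equiv.symm_swap]
    rcases le_or_gt k b' with hk | hk
    · rw [hα k hk]; exact hα _ (by rw [Equiv.swap_apply_def]; split_ifs <;> omega)
    · rw [hfix k hk]
  have hadd :
      equivMapDomain (Equiv.swap i j) m + α = equivMapDomain (Equiv.swap i j) (m + α) := by
    conv_lhs => rw [← hαw]
    simp only [equivMapDomain_eq_mapDomain, mapDomain_add]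
  rw [coeff_permSeries, coeff_coeffAbove, coeff_coeffAbove,
    equivMapDomain_mem_supported_Iic hfix, hadd,
    hf.coeff_equivMapDomain_swap (hi.trans hb) (hj.trans hb)]

lemma IsSymmBelow.exists_coeff_eq_coeffAbove {b : ℤ} {f : MvPowerSeries ℤ ℚ}
    (hf : IsSymmBelow b f) {m : ℤ →₀ ℕ} (hm : m ∈ supported ℕ ℕ (Set.Iic b)) {v : ℕ}
    (hv : v ∈ shape m) :
    ∃ p ∈ supported ℕ ℕ (Set.Iic (b - 1)), shape p = (shape m).erase v ∧
      coeff m f = coeff p (coeffAbove (b - 1) (single b v) f) := by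
  obtain ⟨j, hjv, hv0⟩ := exists_apply_eq_of_mem_shape hv
  have hjb : j ≤ b := by
    by_contra h
    exact hv0 (hjv ▸ mem_supported_Iic.1 hm j (by omega))
  set m₁ := equivMapDomain (Equiv.swap j b) m
  have hm₁b : m₁ b = v := by simp [m₁, hjv]
  have hp : m₁.erase b ∈ supported ℕ ℕ (Set.Iic (b - 1)) := by
    refine mem_supported_Iic.2 fun k hk => ?_
    rcases eq_or_ne k b with rfl | hkb
    · exact erase_same
    · rw [erase_ne hkb, equivMapDomain_apply, Equiv.symm_swap,
        swap_apply_of_le_lt hjb le_rfl (by omega)]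
      exact mem_supported_Iic.1 hm k (by omega)
  refine ⟨m₁.erase b, hp, ?_, ?_⟩
  · rw [← shape_equivMapDomain (Equiv.swap j b) m, shape_eq_cons_erase (m := m₁) (hm₁b ▸ hv0),
      hm₁b, Multiset.erase_cons_head]
  · rw [coeff_coeffAbove, if_pos hp, ← hm₁b, erase_add_single,
      hf.coeff_equivMapDomain_swap hjb le_rfl]

lemma IsSymmBelow.coeff_eq_of_shape_eq {b : ℤ} {f : MvPowerSeries ℤ ℚ} (hf : IsSymmBelow b f)
    {m m' : ℤ →₀ ℕ} (hm : m ∈ supported ℕ ℕ (Set.Iic b)) (hm' : m' ∈ supported ℕ ℕ (Set.Iic b))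
    (h : shape m = shape m') : coeff m f = coeff m' f := by
  induction hl : shape m using Multiset.induction_on generalizing b f m m' with
  | empty =>
    rw [shape_eq_zero_iff.1 hl, shape_eq_zero_iff.1 (h.symm.trans hl)]
  | cons v l ih =>
    obtain ⟨p, hp, hps, hpf⟩ := hf.exists_coeff_eq_coeffAbove hm (hl ▸ Multiset.mem_cons_self v l)
    obtain ⟨p', hp', hps', hpf'⟩ :=
      hf.exists_coeff_eq_coeffAbove hm' (h ▸ hl ▸ Multiset.mem_cons_self v l)
    rw [hpf, hpf']
    have hsymm : IsSymmBelow (b - 1) (coeffAbove (b - 1) (single b v) f) :=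
      hf.isSymmBelow_coeffAbove (by omega) fun i hi => single_eq_of_ne (by omega)
    refine ih hsymm hp hp' ?_ ?_
    · rw [hps, hps', h]
    · rw [hps, hl, Multiset.erase_cons_head]

open Classical in
/-- The monomial symmetric function `m_l` in the variables `x_i`, `i ≤ b`. -/
noncomputable def monomialSymm (l : Multiset ℕ) (b : ℤ) : MvPowerSeries ℤ ℚ :=
  fun m => if m ∈ supported ℕ ℕ (Set.Iic b) ∧ shape m = l then 1 else 0

open Classical in
lemma coeff_monomialSymm (l : Multiset ℕ) (b : ℤ) (m : ℤ →₀ ℕ) :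
    coeff m (monomialSymm l b) =
      if m ∈ supported ℕ ℕ (Set.Iic b) ∧ shape m = l then 1 else 0 := rfl

lemma monomialSymm_mem_symmNonpos (l : Multiset ℕ) : monomialSymm l 0 ∈ SymmNonpos := by
  have hsupp : ∀ m, coeff m (monomialSymm l 0) ≠ 0 →
      m ∈ supported ℕ ℕ (Set.Iic 0) ∧ shape m = l := by
    intro m hm
    by_contra h
    exact hm (if_neg h)
  refine ⟨⟨l.sum, fun m hm => ?_⟩, fun m hm => mem_supported_Iic.1 (hsupp m hm).1,
    fun w _ hw => ?_⟩
  · rw [← (hsupp m hm).2, sum_shape]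
    rfl
  · ext m
    rw [coeff_permSeries, coeff_monomialSymm, coeff_monomialSymm,
      equivMapDomain_mem_supported_Iic hw, shape_equivMapDomain]

lemma coeffAbove_zero_monomialSymm (l : Multiset ℕ) (b : ℤ) :
    coeffAbove b 0 (monomialSymm l (b + 1)) = monomialSymm l b := by
  ext p
  rw [coeff_coeffAbove, coeff_monomialSymm, coeff_monomialSymm, add_zero]
  by_cases hp : p ∈ supported ℕ ℕ (Set.Iic b)
  · have hp' : p ∈ supported ℕ ℕ (Set.Iic (b + 1)) :=
      supported_mono (Set.Iic_subset_Iic.2 (by omega)) hp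
    simp [hp, hp']
  · rw [if_neg hp, if_neg fun h => hp h.1]

lemma coeffAbove_single_monomialSymm {l : Multiset ℕ} {k : ℕ} (hk : k ∈ l) (hk0 : k ≠ 0)
    (b : ℤ) :
    coeffAbove b (single (b + 1) k) (monomialSymm l (b + 1)) = monomialSymm (l.erase k) b := by
  ext p
  rw [coeff_coeffAbove, coeff_monomialSymm, coeff_monomialSymm]
  by_cases hp : p ∈ supported ℕ ℕ (Set.Iic b)
  · have hp' : p + single (b + 1) k ∈ supported ℕ ℕ (Set.Iic (b + 1)) :=
      add_mem (supported_mono (Set.Iic_subset_Iic.2 (by omega)) hp)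
        (single_mem_supported ℕ _ Set.self_mem_Iic)
    have hshape : k ::ₘ shape p = l ↔ shape p = l.erase k :=
      ⟨fun h => by rw [← h, Multiset.erase_cons_head], fun h => by rw [h, Multiset.cons_erase hk]⟩
    rw [if_pos hp, shape_add_single (mem_supported_Iic.1 hp _ (by omega)) hk0]
    simp only [hp, hp', true_and, hshape]
  · rw [if_neg hp, if_neg fun h => hp h.1]

lemma monomialSymm_succ {l : Multiset ℕ} (hl : 0 ∉ l) (b : ℤ) :
    monomialSymm l (b + 1) =
      monomialSymm l b + ∑ k ∈ l.toFinset, X (b + 1) ^ k * monomialSymm (l.erase k) b := by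
  have hS : ∀ α ∈ (insert 0 l.toFinset).image (single (b + 1)), ∀ i ≤ b, α i = 0 := by
    simp only [Finset.mem_image]
    rintro _ ⟨k, -, rfl⟩ i hi
    exact single_eq_of_ne (by omega)
  have hf : ∀ m, coeff m (monomialSymm l (b + 1)) ≠ 0 →
      m.filter (b < ·) ∈ (insert 0 l.toFinset).image (single (b + 1)) := by
    intro m hm
    have ⟨hm₁, hm₂⟩ : m ∈ supported ℕ ℕ (Set.Iic (b + 1)) ∧ shape m = l := by
      by_contra h
      exact hm (if_neg h)
    refine Finset.mem_image.2 ⟨m (b + 1), ?_, ?_⟩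
    · rcases eq_or_ne (m (b + 1)) 0 with h | h
      · exact h ▸ Finset.mem_insert_self _ _
      · exact Finset.mem_insert_of_mem
          (Multiset.mem_toFinset.2 (hm₂ ▸ Multiset.mem_map_of_mem m (mem_support_iff.2 h)))
    · ext i
      rw [filter_apply, single_apply]
      rcases eq_or_ne (b + 1) i with rfl | hne
      · simp
      · rw [if_neg hne]
        split_ifs with hi
        exacts [(mem_supported_Iic.1 hm₁ i (by omega)).symm, rfl]
  rw [eq_sum_monomial_mul_coeffAbove _ b _ hS hf,
    Finset.sum_image fun _ _ _ _ h => single_injective _ h,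
    Finset.sum_insert fun h => hl (Multiset.mem_toFinset.1 h), single_zero, monomial_zero_one,
    one_mul, coeffAbove_zero_monomialSymm]
  refine congrArg _ (Finset.sum_congr rfl fun k hk => ?_)
  have hk' := Multiset.mem_toFinset.1 hk
  rw [← X_pow_eq, coeffAbove_single_monomialSymm hk' (ne_of_mem_of_not_mem hk' hl)]

lemma IsSymmBelow.exists_eq_sum_smul_monomialSymm {b : ℤ} {f : MvPowerSeries ℤ ℚ}
    (hf : IsSymmBelow b f) (hdeg : BddDeg f)
    (hsupp : ∀ m, coeff m f ≠ 0 → m ∈ supported ℕ ℕ (Set.Iic b)) :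
    ∃ (P : Finset (Multiset ℕ)) (c : Multiset ℕ → ℚ), (∀ l ∈ P, 0 ∉ l) ∧
      f = ∑ l ∈ P, c l • monomialSymm l b := by
  classical
  obtain ⟨K, hK⟩ := hdeg
  let c : Multiset ℕ → ℚ := fun l =>
    if h : ∃ m ∈ supported ℕ ℕ (Set.Iic b), shape m = l then coeff h.choose f else 0
  have hc : ∀ m ∈ supported ℕ ℕ (Set.Iic b), c (shape m) = coeff m f := by
    intro m hm
    have h : ∃ m' ∈ supported ℕ ℕ (Set.Iic b), shape m' = shape m := ⟨m, hm, rfl⟩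
    simp only [c, dif_pos h]
    exact hf.coeff_eq_of_shape_eq h.choose_spec.1 hm h.choose_spec.2
  refine ⟨(Finset.range (K + 1)).biUnion fun n => Finset.univ.image (Nat.Partition.parts (n := n)),
    c, ?_, ?_⟩
  · simp only [Finset.mem_biUnion, Finset.mem_image]
    rintro _ ⟨n, -, p, -, rfl⟩ h
    exact (p.parts_pos h).ne rfl
  ext m
  simp only [map_sum, coeff_smul, coeff_monomialSymm, mul_ite, mul_one, mul_zero]
  by_cases hm : m ∈ supported ℕ ℕ (Set.Iic b)
  · simp only [hm, true_and, Finset.sum_ite_eq]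
    split_ifs with hP
    · exact (hc m hm).symm
    · by_contra h
      refine hP (Finset.mem_biUnion.2 ⟨degree m, Finset.mem_range.2 (Nat.lt_succ_of_le (hK m h)),
        Finset.mem_image.2 ⟨⟨shape m, fun hv => ?_, sum_shape m⟩, Finset.mem_univ _, rfl⟩⟩)
      obtain ⟨-, -, hv0⟩ := exists_apply_eq_of_mem_shape hv
      exact Nat.pos_of_ne_zero hv0
  · simp only [hm, false_and, if_false, Finset.sum_const_zero]
    exact not_not.1 (mt (hsupp m) hm)

local notation "𝒜" => Algebra.adjoin ℚ (SymmNonpos ∪ Set.range (X : ℤ → MvPowerSeries ℤ ℚ))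

lemma X_mem_adjoin (i : ℤ) : X i ∈ 𝒜 :=
  Algebra.subset_adjoin (Or.inr ⟨i, rfl⟩)

lemma monomial_one_mem_adjoin (α : ℤ →₀ ℕ) : monomial α (1 : ℚ) ∈ 𝒜 := by
  rw [monomial_one_eq]
  exact prod_mem fun i _ => pow_mem (X_mem_adjoin i) _

lemma monomialSymm_mem_adjoin {l : Multiset ℕ} (hl : 0 ∉ l) {b : ℤ} (hb : b ≤ 0) :
    monomialSymm l b ∈ 𝒜 := by
  induction l using Multiset.strongInductionOn generalizing b with
  | ih l ihl =>
  induction b, hb using Int.leInductionDown with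
  | base => exact Algebra.subset_adjoin (Or.inl (monomialSymm_mem_symmNonpos l))
  | pred n hn ihn =>
    have h := monomialSymm_succ hl (n - 1)
    rw [sub_add_cancel] at h
    rw [eq_sub_of_add_eq h.symm]
    refine sub_mem ihn (sum_mem fun k hk => mul_mem (pow_mem (X_mem_adjoin n) k) ?_)
    have hk' := Multiset.mem_toFinset.1 hk
    exact ihl _ (Multiset.erase_lt.2 hk') (fun h => hl (Multiset.mem_of_mem_erase h)) (by omega)

lemma IsSymmBelow.mem_adjoin {b : ℤ} {f : MvPowerSeries ℤ ℚ} (hf : IsSymmBelow b f) (hb : b ≤ 0)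
    (hdeg : BddDeg f) (hsupp : ∀ m, coeff m f ≠ 0 → m ∈ supported ℕ ℕ (Set.Iic b)) : f ∈ 𝒜 := by
  obtain ⟨P, c, hP, rfl⟩ := hf.exists_eq_sum_smul_monomialSymm hdeg hsupp
  exact sum_mem fun l hl => Subalgebra.smul_mem _ (monomialSymm_mem_adjoin (hP l hl) hb) _

lemma BddDeg.coeffAbove {f : MvPowerSeries ℤ ℚ} (hf : BddDeg f) (b : ℤ) (α : ℤ →₀ ℕ) :
    BddDeg (coeffAbove b α f) := by
  obtain ⟨M, hM⟩ := hf
  refine ⟨M, fun m hm => ?_⟩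
  rw [coeff_coeffAbove] at hm
  split_ifs at hm
  · have h : degree (m + α) ≤ M := hM _ hm
    rw [map_add] at h
    exact le_of_add_le_left h
  · exact absurd rfl hm

lemma mem_adjoin_of_backSym {f : MvPowerSeries ℤ ℚ} (hdeg : BddDeg f) (hsupp : SuppBddAbove f)
    (hf : BackSym f) : f ∈ 𝒜 := by
  obtain ⟨b, hb, hsymm⟩ := hf.exists_isSymmBelow
  have ⟨M, hM⟩ := hdeg
  obtain ⟨N, hN⟩ := hsupp
  let T : ℤ →₀ ℕ := ∑ i ∈ Finset.Ioc b N, single i M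
  have hT : ∀ i, T i = if b < i ∧ i ≤ N then M else 0 := by
    simp [T, finsetSum_apply, single_apply]
  have hS : ∀ α ∈ Finset.Iic T, ∀ i ≤ b, α i = 0 := by
    intro α hα i hi
    have := Finset.mem_Iic.1 hα i
    rwa [hT, if_neg (by omega), Nat.le_zero] at this
  have hfT : ∀ m, coeff m f ≠ 0 → m.filter (b < ·) ∈ Finset.Iic T := by
    intro m hm
    refine Finset.mem_Iic.2 fun i => ?_
    rw [filter_apply, hT]
    by_cases hbi : b < i
    · by_cases hiN : i ≤ N
      · rw [if_pos hbi, if_pos ⟨hbi, hiN⟩]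
        exact (le_degree i m).trans (hM m hm)
      · rw [if_pos hbi, hN m hm i (by omega)]
        exact Nat.zero_le _
    · rw [if_neg hbi]
      exact Nat.zero_le _
  rw [eq_sum_monomial_mul_coeffAbove f b _ hS hfT]
  refine sum_mem fun α hα => mul_mem (monomial_one_mem_adjoin α) ?_
  exact (hsymm.isSymmBelow_coeffAbove le_rfl (hS α hα)).mem_adjoin hb (hdeg.coeffAbove b α)
    fun _ => mem_supported_Iic_of_coeff_coeffAbove_ne_zero

lemma exists_add_eq_of_coeff_mul_ne_zero {σ R : Type*} [Semiring R] {f g : MvPowerSeries σ R}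
    {m : σ →₀ ℕ} (h : coeff m (f * g) ≠ 0) :
    ∃ p q, p + q = m ∧ coeff p f ≠ 0 ∧ coeff q g ≠ 0 := by
  classical
  rw [coeff_mul] at h
  obtain ⟨⟨p, q⟩, hpq, hne⟩ := Finset.exists_ne_zero_of_sum_ne_zero h
  exact ⟨p, q, Finset.HasAntidiagonal.mem_antidiagonal.1 hpq, left_ne_zero_of_mul hne,
    right_ne_zero_of_mul hne⟩

lemma coeff_ne_zero_or_of_coeff_add_ne_zero {σ R : Type*} [Semiring R]
    {f g : MvPowerSeries σ R} {m : σ →₀ ℕ} (h : coeff m (f + g) ≠ 0) :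
    coeff m f ≠ 0 ∨ coeff m g ≠ 0 := by
  by_contra! h'
  exact h (by rw [map_add, h'.1, h'.2, add_zero])

lemma eq_zero_of_coeff_algebraMap_ne_zero {m : ℤ →₀ ℕ} {r : ℚ}
    (h : coeff m (algebraMap ℚ (MvPowerSeries ℤ ℚ) r) ≠ 0) : m = 0 := by
  classical
  by_contra hm
  exact h (by rw [MvPowerSeries.algebraMap_apply, coeff_C, if_neg hm])

def bddDegSubalgebra : Subalgebra ℚ (MvPowerSeries ℤ ℚ) where
  carrier := {f | BddDeg f}
  mul_mem' := by
    rintro f g ⟨M₁, h₁⟩ ⟨M₂, h₂⟩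
    refine ⟨M₁ + M₂, fun m hm => ?_⟩
    obtain ⟨p, q, rfl, hp, hq⟩ := exists_add_eq_of_coeff_mul_ne_zero hm
    have hp' : degree p ≤ M₁ := h₁ p hp
    have hq' : degree q ≤ M₂ := h₂ q hq
    change degree (p + q) ≤ M₁ + M₂
    rw [map_add]
    omega
  add_mem' := by
    rintro f g ⟨M₁, h₁⟩ ⟨M₂, h₂⟩
    refine ⟨max M₁ M₂, fun m hm => ?_⟩
    rcases coeff_ne_zero_or_of_coeff_add_ne_zero hm with h | h
    exacts [(h₁ m h).trans (le_max_left _ _), (h₂ m h).trans (le_max_right _ _)]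
  algebraMap_mem' r := ⟨0, fun m hm => by rw [eq_zero_of_coeff_algebraMap_ne_zero hm]; rfl⟩

def suppBddAboveSubalgebra : Subalgebra ℚ (MvPowerSeries ℤ ℚ) where
  carrier := {f | SuppBddAbove f}
  mul_mem' := by
    rintro f g ⟨N₁, h₁⟩ ⟨N₂, h₂⟩
    refine ⟨max N₁ N₂, fun m hm i hi => ?_⟩
    obtain ⟨p, q, rfl, hp, hq⟩ := exists_add_eq_of_coeff_mul_ne_zero hm
    rw [Finsupp.add_apply, h₁ p hp i (by omega), h₂ q hq i (by omega)]
  add_mem' := by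
    rintro f g ⟨N₁, h₁⟩ ⟨N₂, h₂⟩
    refine ⟨max N₁ N₂, fun m hm i hi => ?_⟩
    rcases coeff_ne_zero_or_of_coeff_add_ne_zero hm with h | h
    exacts [h₁ m h i (by omega), h₂ m h i (by omega)]
  algebraMap_mem' r := ⟨0, fun m hm i _ => by rw [eq_zero_of_coeff_algebraMap_ne_zero hm]; rfl⟩

def backSymSubalgebra : Subalgebra ℚ (MvPowerSeries ℤ ℚ) where
  carrier := {f | BackSym f}
  mul_mem' := by
    rintro f g ⟨b₁, h₁⟩ ⟨b₂, h₂⟩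
    exact ⟨min b₁ b₂, fun i hi => by rw [permSeries_mul, h₁ i (by omega), h₂ i (by omega)]⟩
  add_mem' := by
    rintro f g ⟨b₁, h₁⟩ ⟨b₂, h₂⟩
    exact ⟨min b₁ b₂, fun i hi => by rw [permSeries_add, h₁ i (by omega), h₂ i (by omega)]⟩
  algebraMap_mem' r := ⟨0, fun i _ => permSeries_algebraMap _ r⟩

lemma adjoin_le_inf :
    𝒜 ≤ bddDegSubalgebra ⊓ (suppBddAboveSubalgebra ⊓ backSymSubalgebra) := by
  refine Algebra.adjoin_le (Set.union_subset ?_ ?_)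
  · intro g ⟨hdeg, hsupp, hsymm⟩
    refine ⟨hdeg, ⟨0, hsupp⟩, 0, fun i hi => hsymm _ finite_compl_fixedBy_swap fun k hk => ?_⟩
    exact Equiv.swap_apply_of_ne_of_ne (by omega) (by omega)
  · rintro _ ⟨i, rfl⟩
    have hX : ∀ m, coeff m (X i : MvPowerSeries ℤ ℚ) ≠ 0 → m = single i 1 := by
      classical
      intro m hm
      by_contra h
      exact hm (by rw [coeff_X, if_neg h])
    refine ⟨⟨1, fun m hm => ?_⟩, ⟨i, fun m hm k hk => ?_⟩, i - 1, fun j hj => ?_⟩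
    · rw [hX m hm]; simp
    · rw [hX m hm, single_eq_of_ne (by omega)]
    · rw [permSeries_X, Equiv.symm_swap, Equiv.swap_apply_of_ne_of_ne (by omega) (by omega)]

/-- The back symmetric formal power series ring equals `Λ ⊗ ℚ[x]`: a formal
power series of bounded total degree, with variables bounded above, is back
symmetric if and only if it lies in the subalgebra generated by the symmetric
functions in the nonpositive variables together with the individual variables
`x_i`; conversely every element of that subalgebra is such a back symmetric
series. -/
theorem backSymmetric_eq_lambda_tensor_poly :
    (∀ f : MvPowerSeries ℤ ℚ, BddDeg f → SuppBddAbove f → BackSym f →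
      f ∈ Algebra.adjoin ℚ
        (SymmNonpos ∪ Set.range (MvPowerSeries.X : ℤ → MvPowerSeries ℤ ℚ))) ∧
    (∀ f ∈ Algebra.adjoin ℚ
        (SymmNonpos ∪ Set.range (MvPowerSeries.X : ℤ → MvPowerSeries ℤ ℚ)),
      BddDeg f ∧ SuppBddAbove f ∧ BackSym f) :=
  ⟨fun _ hdeg hsupp hf => mem_adjoin_of_backSym hdeg hsupp hf, fun _ hf => adjoin_le_inf hf⟩
end

section
/- Every nonempty ribbon skew shape $\lambda/\mu$ admits exactly two decompositions as $\lambda/\rho$ a vertical strip and $\rho/\mu$ a horizontal strip (for a partition $\rho$ with $\mu \subseteq \rho \subseteq \lambda$). -/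
/-- The cells of the skew shape `λ/μ`. -/
def skewCells (μ lam : YoungDiagram) : Finset (ℕ × ℕ) := lam.cells \ μ.cells

/-- Two cells are (edgewise) adjacent. -/
def Adj (c d : ℕ × ℕ) : Prop :=
  (c.1 = d.1 ∧ (c.2 = d.2 + 1 ∨ d.2 = c.2 + 1)) ∨
  (c.2 = d.2 ∧ (c.1 = d.1 + 1 ∨ d.1 = c.1 + 1))

/-- A set of cells is edgewise connected. -/
def ConnectedCells (s : Finset (ℕ × ℕ)) : Prop :=
  ∀ c ∈ s, ∀ d ∈ s,
    Relation.ReflTransGen (fun a b => a ∈ s ∧ b ∈ s ∧ Adj a b) c d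

/-- A set of cells contains no `2 × 2` square. -/
def NoSquare (s : Finset (ℕ × ℕ)) : Prop :=
  ∀ i j : ℕ, ¬((i, j) ∈ s ∧ (i + 1, j) ∈ s ∧ (i, j + 1) ∈ s ∧ (i + 1, j + 1) ∈ s)

/-- A set of cells is a vertical strip: at most one box per row. -/
def VStrip (s : Finset (ℕ × ℕ)) : Prop :=
  ∀ p ∈ s, ∀ q ∈ s, p.1 = q.1 → p = q

/-- A set of cells is a horizontal strip: at most one box per column. -/
def HStrip (s : Finset (ℕ × ℕ)) : Prop :=
  ∀ p ∈ s, ∀ q ∈ s, p.2 = q.2 → p = q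

/-!
`lam / ρ` is a vertical strip iff `ρ` contains `lam` with its first column removed, and `ρ / μ`
is a horizontal strip iff row `i + 1` of `ρ` is no longer than row `i` of `μ`. So the
decompositions form the interval `[μ ⊔ lam.dropFirstColumn, hStripCap μ lam]` of Young diagrams.
For a ribbon the two ends differ by a single cell, the last cell of the top row of `lam / μ`:
in every lower row `i` of the ribbon, `lam.rowLen i = μ.rowLen (i - 1) + 1` forces the last cell
out of the upper end as well. An interval of length one has exactly two elements.
-/

namespace YoungDiagram

theorem rowLen_le_rowLen {μ ν : YoungDiagram} (h : μ ≤ ν) (i : ℕ) : μ.rowLen i ≤ ν.rowLen i := by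
  by_contra! hlt
  exact (mem_iff_lt_rowLen.1 (h (mem_iff_lt_rowLen.2 hlt))).false

def dropFirstColumn (lam : YoungDiagram) : YoungDiagram where
  cells := lam.cells.filter fun c => (c.1, c.2 + 1) ∈ lam
  isLowerSet := by
    rintro ⟨i, j⟩ ⟨i', j'⟩ ⟨hi : i' ≤ i, hj : j' ≤ j⟩ h
    simp only [Finset.coe_filter, mem_cells, Set.mem_ofPred_eq] at h ⊢
    exact ⟨lam.up_left_mem hi hj h.1, lam.up_left_mem hi (by omega) h.2⟩

@[simp]
theorem mem_dropFirstColumn {lam : YoungDiagram} {i j : ℕ} :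
    (i, j) ∈ lam.dropFirstColumn ↔ (i, j + 1) ∈ lam := by
  change (i, j) ∈ lam.cells.filter _ ↔ _
  simp only [Finset.mem_filter, mem_cells, and_iff_right_iff_imp]
  exact lam.up_left_mem le_rfl (Nat.le_succ j)

/-- The largest `ρ ≤ lam` for which `ρ / μ` is a horizontal strip. -/
def hStripCap (μ lam : YoungDiagram) : YoungDiagram where
  cells := lam.cells.filter fun c => c.1 = 0 ∨ (c.1 - 1, c.2) ∈ μ
  isLowerSet := by
    rintro ⟨i, j⟩ ⟨i', j'⟩ ⟨hi : i' ≤ i, hj : j' ≤ j⟩ h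
    simp only [Finset.coe_filter, mem_cells, Set.mem_ofPred_eq] at h ⊢
    refine ⟨lam.up_left_mem hi hj h.1, ?_⟩
    rcases Nat.eq_zero_or_pos i' with hi' | hi'
    · exact .inl hi'
    · exact .inr (μ.up_left_mem (by omega) hj (h.2.resolve_left (by omega)))

theorem mem_hStripCap {μ lam : YoungDiagram} {i j : ℕ} :
    (i, j) ∈ hStripCap μ lam ↔ (i, j) ∈ lam ∧ (i = 0 ∨ (i - 1, j) ∈ μ) := by
  change (i, j) ∈ lam.cells.filter _ ↔ _
  simp only [Finset.mem_filter, mem_cells]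

end YoungDiagram

open YoungDiagram

theorem vStrip_sdiff_iff (lam ρ : YoungDiagram) :
    VStrip (lam.cells \ ρ.cells) ↔ lam.dropFirstColumn ≤ ρ := by
  constructor
  · rintro h ⟨i, j⟩ hij
    rw [mem_dropFirstColumn] at hij
    by_contra hj
    have hj1 : (i, j + 1) ∉ ρ := fun h' => hj (ρ.up_left_mem le_rfl j.le_succ h')
    have := h (i, j) (by simpa using ⟨lam.up_left_mem le_rfl j.le_succ hij, hj⟩)
      (i, j + 1) (by simpa using ⟨hij, hj1⟩) rfl
    simp at this
  · rintro h ⟨i, j⟩ hp ⟨i', j'⟩ hq (rfl : i = i')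
    simp only [Finset.mem_sdiff, mem_cells] at hp hq
    rcases lt_trichotomy j j' with hjj | rfl | hjj
    · exact (hp.2 (h (mem_dropFirstColumn.2 (lam.up_left_mem le_rfl hjj hq.1)))).elim
    · rfl
    · exact (hq.2 (h (mem_dropFirstColumn.2 (lam.up_left_mem le_rfl hjj hp.1)))).elim

theorem hStrip_sdiff_iff (ρ μ : YoungDiagram) :
    HStrip (ρ.cells \ μ.cells) ↔ ∀ i j, (i + 1, j) ∈ ρ → (i, j) ∈ μ := by
  constructor
  · intro h i j hij
    by_contra hj
    have hj1 : (i + 1, j) ∉ μ := fun h' => hj (μ.up_left_mem i.le_succ le_rfl h')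
    have := h (i, j) (by simpa using ⟨ρ.up_left_mem i.le_succ le_rfl hij, hj⟩)
      (i + 1, j) (by simpa using ⟨hij, hj1⟩) rfl
    simp at this
  · rintro h ⟨i, j⟩ hp ⟨i', j'⟩ hq (rfl : j = j')
    simp only [Finset.mem_sdiff, mem_cells] at hp hq
    rcases lt_trichotomy i i' with hii | rfl | hii
    · exact (hp.2 (h i j (ρ.up_left_mem hii le_rfl hq.1))).elim
    · rfl
    · exact (hq.2 (h i' j (ρ.up_left_mem hii le_rfl hp.1))).elim

theorem YoungDiagram.le_hStripCap_iff {μ lam ρ : YoungDiagram} :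
    ρ ≤ hStripCap μ lam ↔ ρ ≤ lam ∧ ∀ i j, (i + 1, j) ∈ ρ → (i, j) ∈ μ := by
  constructor
  · intro h
    refine ⟨fun c hc => (mem_hStripCap.1 (h hc)).1, fun i j hij => ?_⟩
    simpa using (mem_hStripCap.1 (h hij)).2
  · rintro ⟨hle, hμ⟩ ⟨i, j⟩ hij
    refine mem_hStripCap.2 ⟨hle hij, ?_⟩
    rcases i with _ | i
    · exact .inl rfl
    · exact .inr (hμ i j hij)

theorem setOf_vStrip_hStrip_eq_Icc (μ lam : YoungDiagram) :
    {ρ : YoungDiagram | μ.cells ⊆ ρ.cells ∧ ρ.cells ⊆ lam.cells ∧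
        VStrip (lam.cells \ ρ.cells) ∧ HStrip (ρ.cells \ μ.cells)} =
      Set.Icc (μ ⊔ lam.dropFirstColumn) (hStripCap μ lam) := by
  ext ρ
  simp only [Set.mem_ofPred_eq, Set.mem_Icc, cells_subset_iff, vStrip_sdiff_iff, hStrip_sdiff_iff,
    sup_le_iff, le_hStripCap_iff]
  tauto

theorem mem_skewCells {μ lam : YoungDiagram} {i j : ℕ} :
    (i, j) ∈ skewCells μ lam ↔ μ.rowLen i ≤ j ∧ j < lam.rowLen i := by
  simp [skewCells, mem_iff_lt_rowLen, and_comm]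

theorem exists_vertical_pair_of_reflTransGen {s : Finset (ℕ × ℕ)} {x y : ℕ × ℕ}
    (h : Relation.ReflTransGen (fun a b => a ∈ s ∧ b ∈ s ∧ Adj a b) x y) {n : ℕ}
    (hx : x.1 ≤ n) (hy : n < y.1) : ∃ c, (n, c) ∈ s ∧ (n + 1, c) ∈ s := by
  induction h with
  | refl => omega
  | @tail b c _ hbc ih =>
    obtain hb | hb := lt_or_ge n b.1
    · exact ih hb
    obtain ⟨hbs, hcs, ⟨hrow, -⟩ | ⟨hcol, hstep | hstep⟩⟩ := hbc
    · omega
    · omega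
    · obtain ⟨b1, b2⟩ := b
      obtain ⟨c1, c2⟩ := c
      obtain ⟨rfl, rfl⟩ : b1 = n ∧ c1 = n + 1 := by simp only at *; omega
      exact ⟨b2, hbs, (show c2 = b2 from hcol.symm) ▸ hcs⟩

section Ribbon

variable {μ lam : YoungDiagram}

theorem rowLen_lt_of_connected (hconn : ConnectedCells (skewCells μ lam)) {i k n : ℕ}
    (hi : μ.rowLen i < lam.rowLen i) (hk : μ.rowLen k < lam.rowLen k) (hin : i ≤ n)
    (hnk : n < k) : μ.rowLen n < lam.rowLen n := by
  obtain ⟨c, hc, -⟩ := exists_vertical_pair_of_reflTransGen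
    (hconn _ (mem_skewCells.2 ⟨le_rfl, hi⟩) _ (mem_skewCells.2 ⟨le_rfl, hk⟩)) hin hnk
  rw [mem_skewCells] at hc
  omega

theorem rowLen_succ_eq_of_ribbon (hconn : ConnectedCells (skewCells μ lam))
    (hsq : NoSquare (skewCells μ lam)) {i : ℕ} (hi : μ.rowLen i < lam.rowLen i)
    (hi1 : μ.rowLen (i + 1) < lam.rowLen (i + 1)) : lam.rowLen (i + 1) = μ.rowLen i + 1 := by
  obtain ⟨c, hc, hc1⟩ := exists_vertical_pair_of_reflTransGen
    (hconn _ (mem_skewCells.2 ⟨le_rfl, hi⟩) _ (mem_skewCells.2 ⟨le_rfl, hi1⟩)) (n := i) le_rfl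
    i.lt_succ_self
  rw [mem_skewCells] at hc hc1
  have hlam_anti := lam.rowLen_anti i (i + 1) i.le_succ
  have hμ_anti := μ.rowLen_anti i (i + 1) i.le_succ
  by_contra hne
  refine hsq i (μ.rowLen i) ⟨?_, ?_, ?_, ?_⟩ <;> rw [mem_skewCells] <;> omega

theorem hStripCap_cells_eq_insert (hsub : μ ≤ lam) (hconn : ConnectedCells (skewCells μ lam))
    (hsq : NoSquare (skewCells μ lam)) {i₀ : ℕ} (hi₀ : μ.rowLen i₀ < lam.rowLen i₀)
    (hmin : ∀ i, μ.rowLen i < lam.rowLen i → i₀ ≤ i) :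
    (hStripCap μ lam).cells = insert (i₀, lam.rowLen i₀ - 1) (μ ⊔ lam.dropFirstColumn).cells := by
  have hle := rowLen_le_rowLen hsub
  ext ⟨i, j⟩
  simp only [Finset.mem_insert, mem_cells, mem_hStripCap, mem_sup, mem_dropFirstColumn,
    Prod.mk.injEq]
  rcases i with _ | k
  · simp only [mem_iff_lt_rowLen, true_or, and_true]
    have hmin_zero := hmin 0
    have hle_zero := hle 0
    obtain rfl | h := eq_or_ne 0 i₀ <;> omega
  · simp only [mem_iff_lt_rowLen, Nat.add_sub_cancel]
    have hmin_k := hmin k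
    have hmin_succ := hmin (k + 1)
    have hle_succ := hle (k + 1)
    have hlam_anti := lam.rowLen_anti k (k + 1) k.le_succ
    have hμ_anti := μ.rowLen_anti k (k + 1) k.le_succ
    have hsucc := rowLen_succ_eq_of_ribbon hconn hsq (i := k)
    have hrow_k (h : μ.rowLen (k + 1) < lam.rowLen (k + 1)) (hk : i₀ ≤ k) :=
      rowLen_lt_of_connected hconn hi₀ h hk k.lt_succ_self
    obtain rfl | h := eq_or_ne (k + 1) i₀ <;> omega

theorem sup_dropFirstColumn_covBy_hStripCap (hsub : μ ≤ lam)
    (hne : (skewCells μ lam).Nonempty) (hconn : ConnectedCells (skewCells μ lam))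
    (hsq : NoSquare (skewCells μ lam)) : μ ⊔ lam.dropFirstColumn ⋖ hStripCap μ lam := by
  classical
  have hrow : ∃ i, μ.rowLen i < lam.rowLen i := by
    obtain ⟨⟨i, j⟩, h⟩ := hne
    exact ⟨i, by rw [mem_skewCells] at h; omega⟩
  obtain ⟨i₀, hi₀, hmin⟩ : ∃ i₀, μ.rowLen i₀ < lam.rowLen i₀ ∧
      ∀ i, μ.rowLen i < lam.rowLen i → i₀ ≤ i :=
    ⟨Nat.find hrow, Nat.find_spec hrow, fun _ => Nat.find_min' hrow⟩
  refine CovBy.of_image (OrderEmbedding.ofMapLEIff cells fun _ _ => cells_subset_iff) ?_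
  rw [OrderEmbedding.coe_ofMapLEIff,
    hStripCap_cells_eq_insert hsub hconn hsq hi₀ hmin]
  refine Finset.covBy_insert ?_
  simp only [mem_cells, mem_sup, mem_dropFirstColumn]
  simp only [mem_iff_lt_rowLen]
  omega

end Ribbon

/-- A nonempty ribbon `λ/μ` admits exactly two decompositions into a vertical
strip `λ/ρ` on top of a horizontal strip `ρ/μ`. -/
theorem ribbon_two_decompositions (μ lam : YoungDiagram)
    (hsub : μ.cells ⊆ lam.cells) (hne : (skewCells μ lam).Nonempty)
    (hconn : ConnectedCells (skewCells μ lam)) (hsq : NoSquare (skewCells μ lam)) :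
    Set.ncard {ρ : YoungDiagram | μ.cells ⊆ ρ.cells ∧ ρ.cells ⊆ lam.cells ∧
        VStrip (lam.cells \ ρ.cells) ∧ HStrip (ρ.cells \ μ.cells)} = 2 := by
  have hcov := sup_dropFirstColumn_covBy_hStripCap (cells_subset_iff.1 hsub) hne hconn hsq
  rw [setOf_vStrip_hStrip_eq_Icc, hcov.Icc_eq, Set.ncard_pair hcov.ne]
end

section
/- If a skew shape $\lambda/\mu$ is thin (all connected components are ribbons), then the number of decompositions of $\lambda/\mu$ into a pair (vertical strip $\lambda/\rho$, horizontal strip $\rho/\mu$) equals $2^{c}$, where $c$ is the number of connected components of $\lambda/\mu$; if $\lambda/\mu$ admits any such decomposition, then it is thin. -/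
/-- A set of cells contains no `2 × 2` square; equivalently, all of its
connected components are ribbons, i.e. the shape is thin. -/
def IsThin (s : Finset (ℕ × ℕ)) : Prop :=
  ∀ i j : ℕ, ¬((i, j) ∈ s ∧ (i + 1, j) ∈ s ∧ (i, j + 1) ∈ s ∧ (i + 1, j + 1) ∈ s)

/-- The number of edgewise-connected components of a set of cells. -/
noncomputable def numComponents (s : Finset (ℕ × ℕ)) : ℕ :=
  Nat.card (Quot (fun a b : {c : ℕ × ℕ // c ∈ s} => Adj a.1 b.1))

/-- `ρ` gives a Λ-decomposition of `λ/μ`: `λ/ρ` is a vertical strip and `ρ/μ`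
a horizontal strip. -/
def IsLambdaDecomp (μ lam ρ : YoungDiagram) : Prop :=
  μ.cells ⊆ ρ.cells ∧ ρ.cells ⊆ lam.cells ∧
    VStrip (lam.cells \ ρ.cells) ∧ HStrip (ρ.cells \ μ.cells)

/-!
Give the cell `(i, j)` the content `j - i`. In a thin skew shape distinct cells have distinct
contents (two cells on a diagonal would span a `2 × 2` square), and the cell of content `c + 1`,
if any, is the right or the upper neighbour of the cell of content `c`. Hence the components are
the maximal runs of consecutive contents, and each ends in a cell with no right or upper
neighbour. In a decomposition a cell of `λ/μ` with a right neighbour in `λ/μ` must lie in `ρ`,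
one with an upper neighbour must not, and each of the `c` end cells may go either way.
-/

namespace Finset

variable (S : Finset ℤ)

theorem exists_add_add_one_notMem (c : ℤ) : ∃ n : ℕ, c + n + 1 ∉ S := by
  obtain ⟨M, hM⟩ := S.bddAbove
  exact ⟨(M - c).toNat, fun h => by have := hM h; omega⟩

/-- The least `t ≥ c` with `t + 1 ∉ S`: for `c ∈ S`, the top of the run of consecutive
elements of `S` through `c`. -/
def runTop (c : ℤ) : ℤ := c + Nat.find (S.exists_add_add_one_notMem c)

variable {S}

theorem le_runTop (c : ℤ) : c ≤ S.runTop c := by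
  simp only [runTop]; omega

theorem runTop_add_one_notMem (c : ℤ) : S.runTop c + 1 ∉ S :=
  Nat.find_spec (S.exists_add_add_one_notMem c)

theorem runTop_eq_self {c : ℤ} (h : c + 1 ∉ S) : S.runTop c = c := by
  simp [runTop, Nat.find_eq_zero, h]

theorem runTop_add_one {c : ℤ} (h : c + 1 ∈ S) : S.runTop (c + 1) = S.runTop c := by
  have shift : ∀ {n : ℕ}, c + 1 + n + 1 ∉ S ↔ c + ↑(n + 1) + 1 ∉ S := by
    intro n; push_cast; ring_nf
  have hc := S.exists_add_add_one_notMem c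
  have hc' := S.exists_add_add_one_notMem (c + 1)
  simp only [runTop]
  rw [Nat.find_comp_succ hc (hc'.imp fun _ => shift.1) (by simpa using h),
    ← Nat.find_congr' (hp := hc') shift]
  push_cast; ring

theorem mem_of_le_runTop {c d : ℤ} (hc : c ∈ S) (hcd : c ≤ d) (hd : d ≤ S.runTop c) :
    d ∈ S := by
  obtain rfl | hlt := hcd.eq_or_lt
  · exact hc
  have := Nat.find_min (S.exists_add_add_one_notMem c) (m := (d - c - 1).toNat)
    (by simp only [runTop] at hd; omega)
  rw [not_not] at this
  convert this using 1; omega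

theorem runTop_mem {c : ℤ} (hc : c ∈ S) : S.runTop c ∈ S :=
  mem_of_le_runTop hc (le_runTop c) le_rfl

end Finset

namespace SkewShape

def content (p : ℕ × ℕ) : ℤ := p.2 - p.1

variable {μ lam : YoungDiagram}

theorem mem_skewCells {p : ℕ × ℕ} :
    p ∈ skewCells μ lam ↔ p ∈ lam.cells ∧ p ∉ μ.cells :=
  Finset.mem_sdiff

theorem mem_skewCells_of_le_of_le {p q r : ℕ × ℕ} (hp : p ∈ skewCells μ lam)
    (hq : q ∈ skewCells μ lam) (hpr : p ≤ r) (hrq : r ≤ q) : r ∈ skewCells μ lam :=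
  mem_skewCells.2 ⟨lam.isLowerSet hrq (mem_skewCells.1 hq).1,
    fun hr => (mem_skewCells.1 hp).2 (μ.isLowerSet hpr hr)⟩

theorem content_injOn (hthin : IsThin (skewCells μ lam)) :
    Set.InjOn content (skewCells μ lam) := by
  have no_diag : ∀ p q, p ∈ skewCells μ lam → q ∈ skewCells μ lam →
      content p = content q → ¬ p.1 < q.1 := by
    intro p q hp hq hpq hlt
    obtain ⟨d, hd1, hd2⟩ : ∃ d, q.1 = p.1 + d + 1 ∧ q.2 = p.2 + d + 1 := by
      unfold content at hpq; exact ⟨q.1 - p.1 - 1, by omega, by omega⟩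
    have between : ∀ a b : ℕ, a ≤ 1 → b ≤ 1 →
        (p.1 + d + a, p.2 + d + b) ∈ skewCells μ lam :=
      fun a b ha hb => mem_skewCells_of_le_of_le hp hq
        (Prod.mk_le_mk.2 ⟨by omega, by omega⟩) (Prod.mk_le_mk.2 ⟨by omega, by omega⟩)
    exact hthin (p.1 + d) (p.2 + d) ⟨between 0 0 (by omega) (by omega),
      between 1 0 le_rfl (by omega), between 0 1 (by omega) le_rfl, between 1 1 le_rfl le_rfl⟩
  intro p hp q hq hpq
  rcases lt_trichotomy p.1 q.1 with h | h | h
  · exact (no_diag p q hp hq hpq h).elim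
  · exact Prod.ext h (by unfold content at hpq; omega)
  · exact (no_diag q p hq hp hpq.symm h).elim

theorem eq_right_or_above_of_content_eq_add_one (hthin : IsThin (skewCells μ lam))
    {p q : ℕ × ℕ} (hp : p ∈ skewCells μ lam) (hq : q ∈ skewCells μ lam)
    (hpq : content q = content p + 1) :
    q = (p.1, p.2 + 1) ∨ p = (q.1 + 1, q.2) := by
  unfold content at hpq
  rcases lt_trichotomy q.1 p.1 with h | h | h
  · by_cases h1 : p.1 = q.1 + 1
    · exact Or.inr (Prod.ext h1 (by omega))
    · have hr := mem_skewCells_of_le_of_le (r := (q.1 + 1, q.2)) hq hp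
        (Prod.mk_le_mk.2 ⟨by omega, le_rfl⟩) (Prod.mk_le_mk.2 ⟨by omega, by omega⟩)
      have := content_injOn hthin hr hp (by unfold content; push_cast; omega)
      grind
  · exact Or.inl (Prod.ext h (by omega))
  · have hr := mem_skewCells_of_le_of_le (r := (q.1 - 1, q.2 - 1)) hp hq
      (Prod.mk_le_mk.2 ⟨by omega, by omega⟩) (Prod.mk_le_mk.2 ⟨by omega, by omega⟩)
    have := content_injOn hthin hr hq (by unfold content; push_cast; omega)
    grind

theorem adj_of_content_eq_add_one (hthin : IsThin (skewCells μ lam))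
    {p q : ℕ × ℕ} (hp : p ∈ skewCells μ lam) (hq : q ∈ skewCells μ lam)
    (hpq : content q = content p + 1) : Adj p q := by
  rcases eq_right_or_above_of_content_eq_add_one hthin hp hq hpq with rfl | rfl
  · exact Or.inl ⟨rfl, Or.inr rfl⟩
  · exact Or.inr ⟨rfl, Or.inl rfl⟩

theorem content_eq_add_one_of_adj {p q : ℕ × ℕ} (h : Adj p q) :
    content q = content p + 1 ∨ content p = content q + 1 := by
  unfold Adj at h; unfold content; omega

def skewContents (μ lam : YoungDiagram) : Finset ℤ := (skewCells μ lam).image content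

def ribbonEnds (μ lam : YoungDiagram) : Finset (ℕ × ℕ) :=
  (skewCells μ lam).filter fun p => content p + 1 ∉ skewContents μ lam

theorem content_mem_skewContents {p : ℕ × ℕ} (hp : p ∈ skewCells μ lam) :
    content p ∈ skewContents μ lam :=
  Finset.mem_image_of_mem _ hp

theorem runTop_content_eq_of_adj {p q : ℕ × ℕ} (hp : p ∈ skewCells μ lam)
    (hq : q ∈ skewCells μ lam) (h : Adj p q) :
    (skewContents μ lam).runTop (content p) = (skewContents μ lam).runTop (content q) := by
  rcases content_eq_add_one_of_adj h with h | h
  · rw [h, Finset.runTop_add_one (h ▸ content_mem_skewContents hq)]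
  · rw [h, Finset.runTop_add_one (h ▸ content_mem_skewContents hp)]

theorem eqvGen_adj_of_content_le_runTop (hthin : IsThin (skewCells μ lam)) {p q : ℕ × ℕ}
    (hp : p ∈ skewCells μ lam) (hq : q ∈ skewCells μ lam) (hpq : content p ≤ content q)
    (hq_top : content q ≤ (skewContents μ lam).runTop (content p)) :
    Relation.EqvGen (fun a b : {c // c ∈ skewCells μ lam} => Adj a.1 b.1)
      ⟨p, hp⟩ ⟨q, hq⟩ := by
  obtain ⟨n, hn⟩ : ∃ n : ℕ, content q = content p + n :=
    ⟨(content q - content p).toNat, by omega⟩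
  induction n generalizing p with
  | zero =>
    obtain rfl : p = q := content_injOn hthin hp hq (by omega)
    exact .refl _
  | succ n ih =>
    have hsucc : content p + 1 ∈ skewContents μ lam :=
      Finset.mem_of_le_runTop (content_mem_skewContents hp) (by omega) (by omega)
    obtain ⟨p', hp', hpp'⟩ := Finset.mem_image.1 hsucc
    have hp'_top : content q ≤ (skewContents μ lam).runTop (content p') := by
      rwa [hpp', Finset.runTop_add_one (hpp' ▸ content_mem_skewContents hp')]
    exact .trans _ _ _ (.rel _ _ (adj_of_content_eq_add_one hthin hp hp' hpp'))
      (ih hp' (by omega) hp'_top (by omega))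

theorem runTop_content_mem_image_ribbonEnds {p : ℕ × ℕ} (hp : p ∈ skewCells μ lam) :
    (skewContents μ lam).runTop (content p) ∈ (ribbonEnds μ lam).image content := by
  obtain ⟨q, hq, hqp⟩ := Finset.mem_image.1 (Finset.runTop_mem (content_mem_skewContents hp))
  refine Finset.mem_image.2 ⟨q, Finset.mem_filter.2 ⟨hq, ?_⟩, hqp⟩
  rw [hqp]
  exact Finset.runTop_add_one_notMem _

theorem numComponents_eq_card_ribbonEnds (hthin : IsThin (skewCells μ lam)) :
    numComponents (skewCells μ lam) = (ribbonEnds μ lam).card := by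
  let top : Quot (fun a b : {c // c ∈ skewCells μ lam} => Adj a.1 b.1) →
      (ribbonEnds μ lam).image content :=
    Quot.lift (fun a => ⟨_, runTop_content_mem_image_ribbonEnds a.2⟩)
      fun a b h => Subtype.ext (runTop_content_eq_of_adj a.2 b.2 h)
  have top_bijective : Function.Bijective top := by
    constructor
    · rintro ⟨a, ha⟩ ⟨b, hb⟩ hab
      have hab : (skewContents μ lam).runTop (content a) =
          (skewContents μ lam).runTop (content b) := congrArg Subtype.val hab
      apply Quot.eqvGen_sound
      rcases le_total (content a) (content b) with h | h
      · exact eqvGen_adj_of_content_le_runTop hthin ha hb h (hab ▸ Finset.le_runTop _)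
      · exact (eqvGen_adj_of_content_le_runTop hthin hb ha h
          (hab ▸ Finset.le_runTop _)).symm
    · rintro ⟨_, hc⟩
      obtain ⟨q, hq, rfl⟩ := Finset.mem_image.1 hc
      exact ⟨Quot.mk _ ⟨q, (Finset.mem_filter.1 hq).1⟩,
        Subtype.ext (Finset.runTop_eq_self (Finset.mem_filter.1 hq).2)⟩
  rw [numComponents, Nat.card_congr (Equiv.ofBijective top top_bijective),
    Nat.card_eq_finsetCard, Finset.card_image_of_injOn]
  exact (content_injOn hthin).mono (Finset.filter_subset _ _)

theorem mem_of_vStrip_sdiff {ρ : YoungDiagram} (hV : VStrip (lam.cells \ ρ.cells)) {i j : ℕ}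
    (h : (i, j + 1) ∈ lam.cells) : (i, j) ∈ ρ.cells := by
  by_contra hij
  have hright : (i, j + 1) ∉ ρ.cells := fun h' =>
    hij (ρ.isLowerSet (Prod.mk_le_mk.2 ⟨le_rfl, j.le_succ⟩) h')
  have hlam : (i, j) ∈ lam.cells := lam.isLowerSet (Prod.mk_le_mk.2 ⟨le_rfl, j.le_succ⟩) h
  have := hV _ (Finset.mem_sdiff.2 ⟨hlam, hij⟩) _ (Finset.mem_sdiff.2 ⟨h, hright⟩) rfl
  simp at this

theorem mem_of_hStrip_sdiff {ρ : YoungDiagram} (hH : HStrip (ρ.cells \ μ.cells)) {i j : ℕ}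
    (h : (i + 1, j) ∈ ρ.cells) : (i, j) ∈ μ.cells := by
  by_contra hij
  have hbelow : (i + 1, j) ∉ μ.cells := fun h' =>
    hij (μ.isLowerSet (Prod.mk_le_mk.2 ⟨i.le_succ, le_rfl⟩) h')
  have hρ : (i, j) ∈ ρ.cells := ρ.isLowerSet (Prod.mk_le_mk.2 ⟨i.le_succ, le_rfl⟩) h
  have := hH _ (Finset.mem_sdiff.2 ⟨hρ, hij⟩) _ (Finset.mem_sdiff.2 ⟨h, hbelow⟩) rfl
  simp at this

/-- In a `2 × 2` square of `λ/μ` the vertical strip `λ/ρ` forces the lower left cell into `ρ`,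
and then the horizontal strip `ρ/μ` forces the cell above it into `μ`. -/
theorem isThin_of_isLambdaDecomp {ρ : YoungDiagram} (hρ : IsLambdaDecomp μ lam ρ) :
    IsThin (skewCells μ lam) := by
  rintro i j ⟨h00, -, -, h11⟩
  exact (mem_skewCells.1 h00).2 <|
    mem_of_hStrip_sdiff hρ.2.2.2 (mem_of_vStrip_sdiff hρ.2.2.1 (mem_skewCells.1 h11).1)

def rowInterior (μ lam : YoungDiagram) : Finset (ℕ × ℕ) :=
  (skewCells μ lam).filter fun p => (p.1, p.2 + 1) ∈ skewCells μ lam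

def decompCells (μ lam : YoungDiagram) (A : Finset (ℕ × ℕ)) : Finset (ℕ × ℕ) :=
  μ.cells ∪ rowInterior μ lam ∪ A

theorem mem_decompCells {A : Finset (ℕ × ℕ)} {p : ℕ × ℕ} :
    p ∈ decompCells μ lam A ↔ p ∈ μ.cells ∨ p ∈ rowInterior μ lam ∨ p ∈ A := by
  simp [decompCells]

theorem mem_skewCells_of_mem_decompCells {A : Finset (ℕ × ℕ)} (hA : A ⊆ ribbonEnds μ lam)
    {p : ℕ × ℕ} (hp : p ∈ decompCells μ lam A) (hμ : p ∉ μ.cells) :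
    p ∈ skewCells μ lam := by
  rcases mem_decompCells.1 hp with h | h | h
  · exact absurd h hμ
  · exact (Finset.mem_filter.1 h).1
  · exact (Finset.mem_filter.1 (hA h)).1

theorem below_notMem_decompCells (hthin : IsThin (skewCells μ lam)) {A : Finset (ℕ × ℕ)}
    (hA : A ⊆ ribbonEnds μ lam) {i j : ℕ} (h : (i, j) ∈ skewCells μ lam)
    (h' : (i + 1, j) ∈ skewCells μ lam) : (i + 1, j) ∉ decompCells μ lam A := by
  have hcontent : content (i, j) = content (i + 1, j) + 1 := by
    unfold content; push_cast; ring
  intro hmem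
  rcases mem_decompCells.1 hmem with hμ | hint | hend
  · exact (mem_skewCells.1 h').2 hμ
  · have := content_injOn hthin h (Finset.mem_filter.1 hint).2
      (by unfold content; push_cast; ring)
    simp at this
  · exact (Finset.mem_filter.1 (hA hend)).2 (hcontent ▸ content_mem_skewContents h)

theorem isLowerSet_decompCells (hthin : IsThin (skewCells μ lam)) {A : Finset (ℕ × ℕ)}
    (hA : A ⊆ ribbonEnds μ lam) : IsLowerSet (decompCells μ lam A : Set (ℕ × ℕ)) := by
  intro p q hqp hp
  rw [Finset.mem_coe] at hp ⊢
  by_cases hqμ : q ∈ μ.cells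
  · exact mem_decompCells.2 (Or.inl hqμ)
  have hpS := mem_skewCells_of_mem_decompCells hA hp fun h => hqμ (μ.isLowerSet hqp h)
  have hqS : q ∈ skewCells μ lam :=
    mem_skewCells.2 ⟨lam.isLowerSet hqp (mem_skewCells.1 hpS).1, hqμ⟩
  obtain ⟨h1, h2⟩ := Prod.le_def.1 hqp
  rcases h2.lt_or_eq with h2 | h2
  · refine mem_decompCells.2 (Or.inr (Or.inl (Finset.mem_filter.2 ⟨hqS, ?_⟩)))
    exact mem_skewCells_of_le_of_le hqS hpS (Prod.mk_le_mk.2 ⟨le_rfl, q.2.le_succ⟩)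
      (Prod.mk_le_mk.2 ⟨h1, h2⟩)
  rcases h1.lt_or_eq with h1 | h1
  · obtain ⟨i, hi⟩ : ∃ i, p.1 = i + 1 := ⟨p.1 - 1, by omega⟩
    have hp' : p = (i + 1, p.2) := Prod.ext hi rfl
    have habove : (i, p.2) ∈ skewCells μ lam := mem_skewCells_of_le_of_le hqS hpS
      (Prod.mk_le_mk.2 ⟨by omega, h2.le⟩) (Prod.mk_le_mk.2 ⟨by omega, le_rfl⟩)
    rw [hp'] at hp hpS
    exact absurd hp (below_notMem_decompCells hthin hA habove hpS)
  · rwa [Prod.ext h1 h2]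

def decompDiagram (hthin : IsThin (skewCells μ lam)) {A : Finset (ℕ × ℕ)}
    (hA : A ⊆ ribbonEnds μ lam) : YoungDiagram :=
  ⟨decompCells μ lam A, isLowerSet_decompCells hthin hA⟩

theorem vStrip_sdiff_decompCells {A : Finset (ℕ × ℕ)} :
    VStrip (lam.cells \ decompCells μ lam A) := by
  intro p hp q hq hpq
  wlog hle : p.2 ≤ q.2 generalizing p q
  · exact (this q hq p hp hpq.symm (by omega)).symm
  obtain ⟨hpl, hpd⟩ := Finset.mem_sdiff.1 hp
  obtain ⟨hql, hqd⟩ := Finset.mem_sdiff.1 hq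
  rcases hle.lt_or_eq with hlt | heq
  · have hpS := mem_skewCells.2 ⟨hpl, fun h => hpd (mem_decompCells.2 (Or.inl h))⟩
    have hqS := mem_skewCells.2 ⟨hql, fun h => hqd (mem_decompCells.2 (Or.inl h))⟩
    refine absurd (mem_decompCells.2 (Or.inr (Or.inl (Finset.mem_filter.2 ⟨hpS, ?_⟩)))) hpd
    exact mem_skewCells_of_le_of_le hpS hqS (Prod.mk_le_mk.2 ⟨le_rfl, p.2.le_succ⟩)
      (Prod.mk_le_mk.2 ⟨hpq.le, hlt⟩)
  · exact Prod.ext hpq heq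

theorem hStrip_decompCells_sdiff (hthin : IsThin (skewCells μ lam)) {A : Finset (ℕ × ℕ)}
    (hA : A ⊆ ribbonEnds μ lam) : HStrip (decompCells μ lam A \ μ.cells) := by
  intro p hp q hq hpq
  wlog hle : p.1 ≤ q.1 generalizing p q
  · exact (this q hq p hp hpq.symm (by omega)).symm
  obtain ⟨hpd, hpμ⟩ := Finset.mem_sdiff.1 hp
  obtain ⟨hqd, hqμ⟩ := Finset.mem_sdiff.1 hq
  rcases hle.lt_or_eq with hlt | heq
  · have hpS := mem_skewCells_of_mem_decompCells hA hpd hpμ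
    have hqS := mem_skewCells_of_mem_decompCells hA hqd hqμ
    obtain ⟨i, hi⟩ : ∃ i, q.1 = i + 1 := ⟨q.1 - 1, by omega⟩
    have hq' : q = (i + 1, q.2) := Prod.ext hi rfl
    have habove : (i, q.2) ∈ skewCells μ lam := mem_skewCells_of_le_of_le hpS hqS
      (Prod.mk_le_mk.2 ⟨by omega, hpq.le⟩) (Prod.mk_le_mk.2 ⟨by omega, le_rfl⟩)
    rw [hq'] at hqd hqS
    exact absurd hqd (below_notMem_decompCells hthin hA habove hqS)
  · exact Prod.ext heq hpq

theorem isLambdaDecomp_decompDiagram (hsub : μ.cells ⊆ lam.cells)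
    (hthin : IsThin (skewCells μ lam)) {A : Finset (ℕ × ℕ)} (hA : A ⊆ ribbonEnds μ lam) :
    IsLambdaDecomp μ lam (decompDiagram hthin hA) := by
  refine ⟨fun p hp => mem_decompCells.2 (Or.inl hp), fun p hp => ?_,
    vStrip_sdiff_decompCells, hStrip_decompCells_sdiff hthin hA⟩
  by_cases hpμ : p ∈ μ.cells
  · exact hsub hpμ
  · exact (mem_skewCells.1 (mem_skewCells_of_mem_decompCells hA hp hpμ)).1

theorem ribbonEnds_inter_decompCells {A : Finset (ℕ × ℕ)} (hA : A ⊆ ribbonEnds μ lam) :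
    ribbonEnds μ lam ∩ decompCells μ lam A = A := by
  refine subset_antisymm (fun p hp => ?_) fun p hp => Finset.mem_inter.2 ⟨hA hp, ?_⟩
  · obtain ⟨hend, hdec⟩ := Finset.mem_inter.1 hp
    obtain ⟨hpS, hnext⟩ := Finset.mem_filter.1 hend
    rcases mem_decompCells.1 hdec with hμ | hint | hA'
    · exact absurd hμ (mem_skewCells.1 hpS).2
    · refine absurd ?_ hnext
      have hright := content_mem_skewContents (Finset.mem_filter.1 hint).2
      convert hright using 1
      unfold content; push_cast; ring
    · exact hA'
  · exact mem_decompCells.2 (Or.inr (Or.inr hp))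

theorem cells_eq_decompCells (hthin : IsThin (skewCells μ lam)) {ρ : YoungDiagram}
    (hρ : IsLambdaDecomp μ lam ρ) :
    ρ.cells = decompCells μ lam (ribbonEnds μ lam ∩ ρ.cells) := by
  obtain ⟨hμρ, hρl, hV, hH⟩ := hρ
  ext p
  rw [mem_decompCells]
  constructor
  · intro hp
    by_cases hpμ : p ∈ μ.cells
    · exact Or.inl hpμ
    have hpS : p ∈ skewCells μ lam := mem_skewCells.2 ⟨hρl hp, hpμ⟩
    by_cases hend : p ∈ ribbonEnds μ lam
    · exact Or.inr (Or.inr (Finset.mem_inter.2 ⟨hend, hp⟩))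
    obtain ⟨q, hqS, hpq⟩ :=
      Finset.mem_image.1 (not_not.1 fun h => hend (Finset.mem_filter.2 ⟨hpS, h⟩))
    rcases eq_right_or_above_of_content_eq_add_one hthin hpS hqS hpq with rfl | rfl
    · exact Or.inr (Or.inl (Finset.mem_filter.2 ⟨hpS, hqS⟩))
    · exact absurd (mem_of_hStrip_sdiff hH hp) (mem_skewCells.1 hqS).2
  · rintro (hμ | hint | hend)
    · exact hμρ hμ
    · exact mem_of_vStrip_sdiff hV (mem_skewCells.1 (Finset.mem_filter.1 hint).2).1
    · exact (Finset.mem_inter.1 hend).2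

theorem ncard_isLambdaDecomp (hsub : μ.cells ⊆ lam.cells) (hthin : IsThin (skewCells μ lam)) :
    {ρ : YoungDiagram | IsLambdaDecomp μ lam ρ}.ncard = 2 ^ (ribbonEnds μ lam).card := by
  rw [← Finset.card_powerset, ← Set.ncard_coe_finset]
  refine Set.ncard_congr (fun ρ _ => ribbonEnds μ lam ∩ ρ.cells)
    (fun ρ _ => by simp) (fun ρ ρ' hρ hρ' h => ?_) fun A hA => ?_
  · exact YoungDiagram.ext ((cells_eq_decompCells hthin hρ).trans
      (h ▸ (cells_eq_decompCells hthin hρ').symm))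
  · have hA : A ⊆ ribbonEnds μ lam := by simpa using hA
    exact ⟨decompDiagram hthin hA, isLambdaDecomp_decompDiagram hsub hthin hA,
      ribbonEnds_inter_decompCells hA⟩

end SkewShape

/-- If `λ/μ` is thin then it has exactly `2^c` Λ-decompositions, where `c` is
its number of connected components; and if `λ/μ` admits any Λ-decomposition
then it is thin. -/
theorem thin_lambda_decompositions (μ lam : YoungDiagram)
    (hsub : μ.cells ⊆ lam.cells) :
    (IsThin (skewCells μ lam) →
      Set.ncard {ρ : YoungDiagram | IsLambdaDecomp μ lam ρ}
        = 2 ^ numComponents (skewCells μ lam)) ∧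
    ((∃ ρ : YoungDiagram, IsLambdaDecomp μ lam ρ) → IsThin (skewCells μ lam)) :=
  ⟨fun hthin => (SkewShape.ncard_isLambdaDecomp hsub hthin).trans
      (congrArg (2 ^ ·) (SkewShape.numComponents_eq_card_ribbonEnds hthin).symm),
    fun ⟨_, hρ⟩ => SkewShape.isThin_of_isLambdaDecomp hρ⟩
end

section
/- For $w \in S_+$ and $i > 0$, the divided difference operator $A_i^a$ in the second variable set acts on double Schubert polynomials by $A_i^a \mathfrak{S}_w(x; a) = -\mathfrak{S}_{s_i w}(x; a)$ if $\ell(s_i w) < \ell(w)$, and $A_i^a \mathfrak{S}_w(x;a) = 0$ otherwise. -/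
open MvPolynomial

/-- The group `S₊` of permutations of `ℕ` moving only finitely many elements
(the positive integers are relabeled `0, 1, 2, …`). -/
def SPlus : Subgroup (Equiv.Perm ℕ) where
  carrier := {w | {i : ℕ | w i ≠ i}.Finite}
  one_mem' := by
    have h : {i : ℕ | (1 : Equiv.Perm ℕ) i ≠ i} = ∅ := by ext i; simp
    show ({i : ℕ | (1 : Equiv.Perm ℕ) i ≠ i}).Finite
    rw [h]; exact Set.finite_empty
  mul_mem' := by
    intro a b ha hb
    show ({i : ℕ | (a * b) i ≠ i}).Finite
    refine (Set.Finite.union ha hb).subset ?_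
    intro j hj
    simp only [Set.mem_setOf_eq] at hj
    by_contra hc
    simp only [Set.mem_union, Set.mem_setOf_eq, not_or, not_not] at hc
    exact hj (by rw [Equiv.Perm.mul_apply, hc.2, hc.1])
  inv_mem' := by
    intro a ha
    show ({i : ℕ | a⁻¹ i ≠ i}).Finite
    have h : {i : ℕ | a⁻¹ i ≠ i} = {i : ℕ | a i ≠ i} := by
      ext i
      simp only [Set.mem_setOf_eq, ne_eq, Equiv.Perm.inv_eq_iff_eq]
      exact not_congr eq_comm
    rw [h]; exact ha

/-- The simple transposition `s_i = (i, i+1)` as an element of `S₊`. -/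
def sN (i : ℕ) : SPlus :=
  ⟨Equiv.swap i (i + 1), by
    show ({j : ℕ | Equiv.swap i (i + 1) j ≠ j}).Finite
    refine ((Set.finite_singleton (i + 1)).insert i).subset ?_
    intro j hj
    simp only [Set.mem_setOf_eq] at hj
    by_contra hc
    simp only [Set.mem_insert_iff, Set.mem_singleton_iff, not_or] at hc
    exact hj (Equiv.swap_apply_of_ne_of_ne hc.1 hc.2)⟩

/-- Coxeter length = number of inversions. -/
noncomputable def lenS (w : SPlus) : ℕ :=
  Nat.card {p : ℕ × ℕ | p.1 < p.2 ∧ (w : Equiv.Perm ℕ) p.2 < (w : Equiv.Perm ℕ) p.1}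

/-- The defining properties of the family of Schubert polynomials `𝔖_w`, `w ∈ S₊`:
`𝔖_id = 1`; `𝔖_w` is homogeneous of degree `ℓ(w)`; and
`A_i 𝔖_w = 𝔖_{w sᵢ}` if `ℓ(w sᵢ) < ℓ(w)` and `A_i 𝔖_w = 0` otherwise, where the
divided difference relations are expressed via
`(x_i - x_{i+1}) 𝔖_{w sᵢ} = 𝔖_w - s_i 𝔖_w` resp. `s_i 𝔖_w = 𝔖_w`. -/
def SchubertFamily (S : SPlus → MvPolynomial ℕ ℚ) : Prop :=
  S 1 = 1 ∧
  (∀ w : SPlus, (S w).IsHomogeneous (lenS w)) ∧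
  (∀ (w : SPlus) (i : ℕ),
    if lenS (w * sN i) < lenS w then
      (X i - X (i + 1)) * S (w * sN i)
        = S w - rename (fun j => Equiv.swap i (i + 1) j) (S w)
    else rename (fun j => Equiv.swap i (i + 1) j) (S w) = S w)

/-- The ring `ℚ[x; a]` of double Schubert polynomials: the `x`-variables are
indexed by `Sum.inl`, the `a`-variables by `Sum.inr`. -/
abbrev DR := MvPolynomial (ℕ ⊕ ℕ) ℚ

/-- The exchange of `x_i` and `x_{i+1}`. -/
noncomputable def sx (i : ℕ) : DR →ₐ[ℚ] DR :=
  rename (fun v => Equiv.swap (Sum.inl i : ℕ ⊕ ℕ) (Sum.inl (i + 1)) v)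

/-- The exchange of `a_i` and `a_{i+1}`. -/
noncomputable def sa (i : ℕ) : DR →ₐ[ℚ] DR :=
  rename (fun v => Equiv.swap (Sum.inr i : ℕ ⊕ ℕ) (Sum.inr (i + 1)) v)

/-- The substitution setting `x_i = a_i` for all `i`. -/
noncomputable def setXtoA : DR →ₐ[ℚ] DR :=
  rename (Sum.elim Sum.inr Sum.inr)

/-- The defining properties of the family of double Schubert polynomials
`𝔖_w(x; a)`, `w ∈ S₊` (Theorem `thm:double`): `𝔖_id = 1`; `𝔖_w(a; a) = 0` for
`w ≠ id`; and `A_i^x 𝔖_w = 𝔖_{w sᵢ}` if `ℓ(w sᵢ) < ℓ(w)`, `A_i^x 𝔖_w = 0`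
otherwise. -/
def DoubleSchubertFamily (D : SPlus → DR) : Prop :=
  D 1 = 1 ∧
  (∀ w : SPlus, w ≠ 1 → setXtoA (D w) = 0) ∧
  (∀ (w : SPlus) (i : ℕ),
    if lenS (w * sN i) < lenS w then
      (X (Sum.inl i) - X (Sum.inl (i + 1))) * D (w * sN i) = D w - sx i (D w)
    else sx i (D w) = D w)

/-- The underlying function of the longest element `w₀⁽ⁿ⁾` of `Sₙ`. -/
def w0fun (n : ℕ) : ℕ → ℕ := fun i => if i < n then n - 1 - i else i

lemma w0fun_involutive (n : ℕ) : Function.Involutive (w0fun n) := by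
  intro i
  unfold w0fun
  by_cases h : i < n
  · rw [if_pos h, if_pos (by omega)]
    omega
  · rw [if_neg h, if_neg h]

/-- The longest element `w₀⁽ⁿ⁾` of `Sₙ` as a permutation. -/
def w0perm (n : ℕ) : Equiv.Perm ℕ :=
  Function.Involutive.toPerm (w0fun n) (w0fun_involutive n)

/-- The longest element `w₀⁽ⁿ⁾` of `Sₙ` as an element of `S₊`. -/
def w0 (n : ℕ) : SPlus :=
  ⟨w0perm n, by
    show ({j : ℕ | w0perm n j ≠ j}).Finite
    refine (Set.finite_Iio n).subset ?_
    intro j hj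
    simp only [Set.mem_setOf_eq] at hj
    by_contra hc
    simp only [Set.mem_Iio, not_lt] at hc
    refine hj ?_
    show w0fun n j = j
    unfold w0fun
    rw [if_neg (by omega)]⟩

/-- The double Schubert polynomials, defined top-down:
`𝔖_{w₀⁽ⁿ⁾}(x; a) = ∏_{i+j ≤ n} (x_i - a_j)` and `𝔖_w = A_i^x 𝔖_{w sᵢ}` whenever
`ℓ(w sᵢ) > ℓ(w)`. -/
def DoubleSchubertFamily' (D : SPlus → DR) : Prop :=
  (∀ n : ℕ, D (w0 n) =
    ∏ p ∈ (Finset.range n ×ˢ Finset.range n).filter (fun p => p.1 + p.2 + 2 ≤ n),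
      (X (Sum.inl p.1) - X (Sum.inr p.2))) ∧
  (∀ (w : SPlus) (i : ℕ), lenS w < lenS (w * sN i) →
    (X (Sum.inl i) - X (Sum.inl (i + 1))) * D w
      = D (w * sN i) - sx i (D (w * sN i)))

/-- The transposition `(i j)` as an element of `S₊`. -/
def swapS (i j : ℕ) : SPlus :=
  ⟨Equiv.swap i j, by
    show ({k : ℕ | Equiv.swap i j k ≠ k}).Finite
    refine ((Set.finite_singleton j).insert i).subset ?_
    intro k hk
    simp only [Set.mem_setOf_eq] at hk
    by_contra hc
    simp only [Set.mem_insert_iff, Set.mem_singleton_iff, not_or] at hc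
    exact hk (Equiv.swap_apply_of_ne_of_ne hc.1 hc.2)⟩

/-- Bruhat order on `S₊`: the reflexive-transitive closure of right
multiplication by a transposition which increases length. -/
def BruhatLe (v w : SPlus) : Prop :=
  Relation.ReflTransGen
    (fun a b : SPlus => lenS a < lenS b ∧ ∃ i j : ℕ, i ≠ j ∧ b = a * swapS i j) v w

/-- The substitution `x_i ↦ a_{w(i)}`, `a_i ↦ a_i`. -/
noncomputable def specAt (w : SPlus) : DR →ₐ[ℚ] DR :=
  rename (Sum.elim (fun i => Sum.inr ((w : Equiv.Perm ℕ) i)) Sum.inr)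

/-!
Descending induction on `ℓ(w)` among the permutations of `{0, …, n-1}`. For `w = w₀⁽ⁿ⁾` and
`i + 2 ≤ n`, the only factor of `∏ (x_p - a_q)` that is not symmetric in `a_i, a_{i+1}` is
`x_j - a_i` with `j = n - 2 - i`; since `sᵢ w₀ = w₀ sⱼ` and the remaining product is
`𝔖_{w₀ sⱼ}`, the claim follows. Any other `w` has an ascent `j`, so `𝔖_w = A_j^x 𝔖_{w sⱼ}`,
and as `A_i^a` commutes with `A_j^x` the claim for `w sⱼ` passes to `w`: `w` and `w sⱼ` have
the same left descent behaviour at `i` unless `w sⱼ = sᵢ w`, and in that case `𝔖_w` is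
symmetric in `x_j, x_{j+1}`.
-/

open Equiv

def FixedFrom (σ : Perm ℕ) (n : ℕ) : Prop := ∀ m, n ≤ m → σ m = m

lemma exists_fixedFrom (w : SPlus) : ∃ n, FixedFrom w n := by
  obtain ⟨n, hn⟩ := (w.2 : {m : ℕ | (w : Perm ℕ) m ≠ m}.Finite).bddAbove
  exact ⟨n + 1, fun m hm => by_contra fun hne => absurd (hn hne) (by omega)⟩

namespace FixedFrom

variable {σ : Perm ℕ} {n : ℕ}

lemma apply_lt (h : FixedFrom σ n) {m : ℕ} (hm : m < n) : σ m < n := by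
  by_contra! hle
  exact absurd (σ.injective (h _ hle)) (by omega)

lemma mul_swap (h : FixedFrom σ n) {j : ℕ} (hj : j + 1 < n) :
    FixedFrom (σ * swap j (j + 1)) n := fun m hm => by
  rw [Perm.mul_apply, swap_apply_of_ne_of_ne (by omega) (by omega), h m hm]

end FixedFrom

def inversions (σ : Perm ℕ) : Set (ℕ × ℕ) := {p | p.1 < p.2 ∧ σ p.2 < σ p.1}

lemma FixedFrom.inversions_subset {σ : Perm ℕ} {n : ℕ} (h : FixedFrom σ n) :
    inversions σ ⊆ Set.Iio n ×ˢ Set.Iio n := by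
  rintro ⟨a, b⟩ ⟨hab, hσ⟩
  dsimp only at hab hσ
  have hb : b < n := by
    by_contra! hb
    rw [h b hb] at hσ
    rcases lt_or_ge a n with ha | ha
    · exact absurd (h.apply_lt ha) (by omega)
    · rw [h a ha] at hσ; omega
  exact ⟨by simp only [Set.mem_Iio]; omega, hb⟩

lemma lenS_eq_ncard (w : SPlus) : lenS w = (inversions w).ncard := Nat.card_coe_set_eq _

lemma inversions_finite (w : SPlus) : (inversions w).Finite := by
  obtain ⟨n, hn⟩ := exists_fixedFrom w
  exact ((Set.finite_Iio n).prod (Set.finite_Iio n)).subset hn.inversions_subset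

lemma lenS_le_of_fixedFrom {w : SPlus} {n : ℕ} (h : FixedFrom w n) : lenS w ≤ n * n := by
  rw [lenS_eq_ncard]
  calc (inversions w).ncard ≤ (Set.Iio n ×ˢ Set.Iio n).ncard :=
        Set.ncard_le_ncard h.inversions_subset ((Set.finite_Iio n).prod (Set.finite_Iio n))
    _ = n * n := by simp [Set.ncard_prod]

lemma swap_succ_lt_swap_succ {j p q : ℕ} (h : p < q) (hne : ¬(p = j ∧ q = j + 1)) :
    swap j (j + 1) p < swap j (j + 1) q := by
  simp only [swap_apply_def]
  split_ifs <;> omega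

lemma inversions_mul_swap {σ : Perm ℕ} {j : ℕ} (hj : σ j < σ (j + 1)) :
    inversions (σ * swap j (j + 1)) =
      insert (j, j + 1) (Prod.map (swap j (j + 1)) (swap j (j + 1)) ⁻¹' inversions σ) := by
  ext ⟨a, b⟩
  simp only [inversions, Set.mem_insert_iff, Set.mem_preimage, Set.mem_ofPred_eq, Prod.map,
    Prod.mk.injEq, Perm.mul_apply]
  constructor
  · rintro ⟨hab, hσ⟩
    by_cases hjab : a = j ∧ b = j + 1
    · exact Or.inl hjab
    · exact Or.inr ⟨swap_succ_lt_swap_succ hab hjab, hσ⟩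
  · rintro (⟨rfl, rfl⟩ | ⟨hab, hσ⟩)
    · simpa using hj
    · refine ⟨?_, hσ⟩
      by_contra! hba
      rcases hba.lt_or_eq with hba | rfl
      · by_cases hjba : b = j ∧ a = j + 1
        · obtain ⟨rfl, rfl⟩ := hjba
          simp only [swap_apply_left, swap_apply_right] at hσ
          omega
        · exact absurd (swap_succ_lt_swap_succ hba hjba) (by omega)
      · omega

lemma coe_sN (j : ℕ) : ((sN j : SPlus) : Perm ℕ) = swap j (j + 1) := rfl

lemma sN_mul_self (j : ℕ) : sN j * sN j = 1 :=
  Subtype.ext (swap_mul_self j (j + 1))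

lemma lenS_mul_sN_of_lt {w : SPlus} {j : ℕ} (h : (w : Perm ℕ) j < (w : Perm ℕ) (j + 1)) :
    lenS (w * sN j) = lenS w + 1 := by
  have hinv : Function.Involutive (Prod.map (swap j (j + 1)) (swap j (j + 1))) :=
    fun p => by simp [Prod.map]
  rw [lenS_eq_ncard, lenS_eq_ncard, Subgroup.coe_mul, coe_sN, inversions_mul_swap h,
    ← Set.image_eq_preimage_of_inverse hinv hinv,
    Set.ncard_insert_of_notMem ?_ ((inversions_finite w).image _),
    Set.ncard_image_of_injective _ hinv.injective]
  rintro ⟨⟨a, b⟩, ⟨hab, -⟩, hp⟩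
  simp only [Prod.map, Prod.mk.injEq, swap_apply_eq_iff, swap_apply_left,
    swap_apply_right] at hab hp
  omega

lemma lenS_mul_sN_lt_iff (w : SPlus) (j : ℕ) :
    lenS (w * sN j) < lenS w ↔ (w : Perm ℕ) (j + 1) < (w : Perm ℕ) j := by
  rcases lt_trichotomy ((w : Perm ℕ) j) ((w : Perm ℕ) (j + 1)) with h | h | h
  · have := lenS_mul_sN_of_lt h
    constructor <;> intro <;> omega
  · exact absurd ((w : Perm ℕ).injective h) (by omega)
  · have hv : ((w * sN j : SPlus) : Perm ℕ) j < ((w * sN j : SPlus) : Perm ℕ) (j + 1) := by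
      simpa [coe_sN] using h
    have := lenS_mul_sN_of_lt hv
    rw [mul_assoc, sN_mul_self, mul_one] at this
    exact iff_of_true (by omega) h

lemma inversions_inv (σ : Perm ℕ) :
    inversions σ⁻¹ = (fun p => (σ p.2, σ p.1)) '' inversions σ := by
  ext ⟨a, b⟩
  constructor
  · rintro ⟨hab, hσ⟩
    exact ⟨(σ⁻¹ b, σ⁻¹ a), ⟨hσ, by simpa using hab⟩, by simp⟩
  · rintro ⟨⟨c, d⟩, ⟨hcd, hσ⟩, hp⟩
    simp only [Prod.mk.injEq] at hp
    obtain ⟨rfl, rfl⟩ := hp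
    exact ⟨hσ, by simpa using hcd⟩

lemma lenS_inv (w : SPlus) : lenS w⁻¹ = lenS w := by
  rw [lenS_eq_ncard, lenS_eq_ncard, Subgroup.coe_inv, inversions_inv,
    Set.ncard_image_of_injective]
  rintro ⟨a, b⟩ ⟨c, d⟩ h
  simp only [Prod.mk.injEq, EmbeddingLike.apply_eq_iff_eq] at h
  rw [h.1, h.2]

lemma lenS_sN_mul_lt_iff (w : SPlus) (i : ℕ) :
    lenS (sN i * w) < lenS w ↔ (w : Perm ℕ)⁻¹ (i + 1) < (w : Perm ℕ)⁻¹ i := by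
  have hsN : (sN i)⁻¹ = sN i := inv_eq_of_mul_eq_one_left (sN_mul_self i)
  rw [← lenS_inv (sN i * w), ← lenS_inv w, mul_inv_rev, hsN, lenS_mul_sN_lt_iff,
    Subgroup.coe_inv]

lemma w0_apply (n m : ℕ) : (w0 n : Perm ℕ) m = if m < n then n - 1 - m else m := rfl

lemma w0_inv (n : ℕ) : ((w0 n : SPlus) : Perm ℕ)⁻¹ = w0 n :=
  (w0fun_involutive n).toPerm_symm

lemma eq_w0_of_forall_lt {w : SPlus} {n : ℕ} (hw : FixedFrom w n)
    (h : ∀ j, j + 1 < n → (w : Perm ℕ) (j + 1) < (w : Perm ℕ) j) : w = w0 n := by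
  have upper : ∀ p < n, (w : Perm ℕ) p + p ≤ n - 1 := by
    intro p hp
    induction p with
    | zero => have := hw.apply_lt hp; omega
    | succ p ih => have := h p hp; have := ih (by omega); omega
  have lower : ∀ k < n, n - 1 ≤ (w : Perm ℕ) (n - 1 - k) + (n - 1 - k) := by
    intro k hk
    induction k with
    | zero => omega
    | succ k ih =>
      have := h (n - 1 - (k + 1)) (by omega)
      rw [show n - 1 - (k + 1) + 1 = n - 1 - k by omega] at this
      have := ih (by omega)
      omega
  refine Subtype.ext (Equiv.ext fun m => ?_)
  rw [w0_apply]
  split_ifs with hm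
  · have := upper m hm
    have := lower (n - 1 - m) (by omega)
    rw [show n - 1 - (n - 1 - m) = m by omega] at this
    omega
  · exact hw m (by omega)

lemma exists_lt_succ_or_eq_w0 {w : SPlus} {n : ℕ} (hw : FixedFrom w n) :
    (∃ j, j + 1 < n ∧ (w : Perm ℕ) j < (w : Perm ℕ) (j + 1)) ∨ w = w0 n := by
  refine or_iff_not_imp_left.2 fun hasc => eq_w0_of_forall_lt hw fun j hj => ?_
  have hne : (w : Perm ℕ) j ≠ (w : Perm ℕ) (j + 1) := fun he => by
    have := (w : Perm ℕ).injective he; omega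
  exact (lt_or_gt_of_ne hne).resolve_left fun hlt => hasc ⟨j, hj, hlt⟩

lemma sN_mul_w0 {n i : ℕ} (hi : i + 2 ≤ n) : sN i * w0 n = w0 n * sN (n - 2 - i) := by
  refine Subtype.ext (Equiv.ext fun m => ?_)
  simp only [Subgroup.coe_mul, Perm.mul_apply, coe_sN, w0_apply, swap_apply_def]
  split_ifs <;> omega

lemma mul_sN_eq_sN_mul {w : SPlus} {i j : ℕ} (h₁ : (w : Perm ℕ) j = i)
    (h₂ : (w : Perm ℕ) (j + 1) = i + 1) : w * sN j = sN i * w := by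
  refine Subtype.ext (Equiv.ext fun m => ?_)
  simp only [Subgroup.coe_mul, Perm.mul_apply, coe_sN]
  subst h₁
  rw [← h₂, swap_apply_apply]
  simp

section Swaps

variable (i j p : ℕ)

@[simp] lemma sa_X_inl : sa i (X (Sum.inl p)) = X (Sum.inl p) := by
  simp [sa, swap_apply_of_ne_of_ne]

@[simp] lemma sa_X_inr : sa i (X (Sum.inr p)) = X (Sum.inr (swap i (i + 1) p)) := by
  simp [sa, Sum.inr_injective.swap_apply]

@[simp] lemma sx_X_inl : sx j (X (Sum.inl p)) = X (Sum.inl (swap j (j + 1) p)) := by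
  simp [sx, Sum.inl_injective.swap_apply]

@[simp] lemma sx_X_inr : sx j (X (Sum.inr p)) = X (Sum.inr p) := by
  simp [sx, swap_apply_of_ne_of_ne]

lemma sx_sx (f : DR) : sx j (sx j f) = f := by
  rw [← AlgHom.comp_apply, show (sx j).comp (sx j) = AlgHom.id ℚ DR from
    algHom_ext fun v => by cases v <;> simp, AlgHom.id_apply]

lemma sa_sx (f : DR) : sa i (sx j f) = sx j (sa i f) := by
  rw [← AlgHom.comp_apply, ← AlgHom.comp_apply,
    show (sa i).comp (sx j) = (sx j).comp (sa i) from algHom_ext fun v => by cases v <;> simp]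

end Swaps

lemma MvPolynomial.X_sub_X_ne_zero {σ R : Type*} [CommRing R] [Nontrivial R] {u v : σ}
    (h : u ≠ v) : (X u - X v : MvPolynomial σ R) ≠ 0 :=
  sub_ne_zero.2 fun he => h (X_injective he)

lemma map_prod_eq_self_of_involutive {ι R F : Type*} [CommMonoid R] [FunLike F R R]
    [MonoidHomClass F R R] (φ : F) {s : Finset ι} {f : ι → R} {τ : ι → ι}
    (hτ : Function.Involutive τ) (hs : ∀ p ∈ s, τ p ∈ s) (hf : ∀ p ∈ s, φ (f p) = f (τ p)) :
    φ (∏ p ∈ s, f p) = ∏ p ∈ s, f p := by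
  rw [map_prod]
  exact Finset.prod_nbij' τ τ hs hs (fun p _ => hτ p) (fun p _ => hτ p) hf

lemma X_inl_sub_X_inl_succ_ne_zero (j : ℕ) : (X (Sum.inl j) - X (Sum.inl (j + 1)) : DR) ≠ 0 :=
  X_sub_X_ne_zero (Sum.inl_injective.ne (by omega))

/-- The value that `A_i^a 𝔖_w` is claimed to take. -/
noncomputable def leftDivDiffValue (D : SPlus → DR) (w : SPlus) (i : ℕ) : DR :=
  if lenS (sN i * w) < lenS w then -D (sN i * w) else 0

namespace DoubleSchubertFamily'

variable {D : SPlus → DR}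

lemma X_sub_X_mul_of_lt (hD : DoubleSchubertFamily' D) {w : SPlus} {j : ℕ}
    (h : (w : Perm ℕ) j < (w : Perm ℕ) (j + 1)) :
    (X (Sum.inl j) - X (Sum.inl (j + 1))) * D w = D (w * sN j) - sx j (D (w * sN j)) :=
  hD.2 w j (by rw [lenS_mul_sN_of_lt h]; omega)

lemma sx_eq_of_lt (hD : DoubleSchubertFamily' D) {w : SPlus} {j : ℕ}
    (h : (w : Perm ℕ) j < (w : Perm ℕ) (j + 1)) : sx j (D w) = D w := by
  have R := hD.X_sub_X_mul_of_lt h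
  have Rx := congrArg (sx j) R
  simp only [map_mul, map_sub, sx_sx, sx_X_inl, swap_apply_left, swap_apply_right] at Rx
  exact mul_left_cancel₀ (X_inl_sub_X_inl_succ_ne_zero j) (by linear_combination -R - Rx)

lemma leftDivDiffValue_mul_sN (hD : DoubleSchubertFamily' D) {w : SPlus} {i j : ℕ}
    (h : (w : Perm ℕ) j < (w : Perm ℕ) (j + 1)) :
    leftDivDiffValue D (w * sN j) i - sx j (leftDivDiffValue D (w * sN j) i) =
      (X (Sum.inl j) - X (Sum.inl (j + 1))) * leftDivDiffValue D w i := by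
  have hlen := lenS_mul_sN_of_lt h
  have hinv : ∀ m, ((w * sN j : SPlus) : Perm ℕ)⁻¹ m = swap j (j + 1) ((w : Perm ℕ)⁻¹ m) := by
    simp [coe_sN, mul_inv_rev]
  have hw_inv : ∀ {m k}, (w : Perm ℕ)⁻¹ m = k ↔ (w : Perm ℕ) k = m :=
    Perm.inv_eq_iff_eq.trans eq_comm
  unfold leftDivDiffValue
  by_cases hi : lenS (sN i * w) < lenS w
  · rw [lenS_sN_mul_lt_iff] at hi
    have hv : lenS (sN i * (w * sN j)) < lenS (w * sN j) := by
      rw [lenS_sN_mul_lt_iff, hinv, hinv]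
      refine swap_succ_lt_swap_succ hi fun ⟨h₁, h₂⟩ => ?_
      rw [hw_inv] at h₁ h₂
      omega
    have hasc : ((sN i * w : SPlus) : Perm ℕ) j < ((sN i * w : SPlus) : Perm ℕ) (j + 1) := by
      simp only [Subgroup.coe_mul, coe_sN, Perm.mul_apply]
      refine swap_succ_lt_swap_succ h fun ⟨h₁, h₂⟩ => ?_
      rw [← hw_inv] at h₁ h₂
      omega
    rw [if_pos hv, if_pos ((lenS_sN_mul_lt_iff w i).2 hi), ← mul_assoc, map_neg]
    linear_combination hD.X_sub_X_mul_of_lt hasc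
  · by_cases hspecial : (w : Perm ℕ) j = i ∧ (w : Perm ℕ) (j + 1) = i + 1
    · rw [mul_sN_eq_sN_mul hspecial.1 hspecial.2, ← mul_assoc, sN_mul_self, one_mul,
        if_pos (by rw [← mul_sN_eq_sN_mul hspecial.1 hspecial.2]; omega), if_neg hi, map_neg,
        hD.sx_eq_of_lt h]
      ring
    · have hv : ¬ lenS (sN i * (w * sN j)) < lenS (w * sN j) := by
        rw [lenS_sN_mul_lt_iff, hinv, hinv, not_lt]
        rw [lenS_sN_mul_lt_iff, not_lt] at hi
        refine (swap_succ_lt_swap_succ (lt_of_le_of_ne hi fun he => by simp at he)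
          fun ⟨h₁, h₂⟩ => hspecial ⟨hw_inv.1 h₁, hw_inv.1 h₂⟩).le
      rw [if_neg hv, if_neg hi, map_zero]
      ring

lemma sub_sa_w0 (hD : DoubleSchubertFamily' D) (n i : ℕ) :
    D (w0 n) - sa i (D (w0 n)) =
      (X (Sum.inr i) - X (Sum.inr (i + 1))) * leftDivDiffValue D (w0 n) i := by
  have hdesc : lenS (sN i * w0 n) < lenS (w0 n) ↔ i + 2 ≤ n := by
    rw [lenS_sN_mul_lt_iff, w0_inv, w0_apply, w0_apply]
    split_ifs <;> omega
  unfold leftDivDiffValue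
  by_cases hi : i + 2 ≤ n
  · set T := (Finset.range n ×ˢ Finset.range n).filter (fun p => p.1 + p.2 + 2 ≤ n)
    set j := n - 2 - i
    have hmem : (j, i) ∈ T := by simp [T, j]; omega
    set C := ∏ p ∈ T.erase (j, i), (X (Sum.inl p.1) - X (Sum.inr p.2) : DR)
    have hsplit : D (w0 n) = (X (Sum.inl j) - X (Sum.inr i)) * C := by
      rw [hD.1 n, ← Finset.mul_prod_erase _ _ hmem]
    have hsaC : sa i C = C := by
      refine map_prod_eq_self_of_involutive _ (τ := fun p => (p.1, swap i (i + 1) p.2))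
        (fun p => by simp) (fun ⟨a, b⟩ hp => ?_) (fun p _ => by simp)
      simp only [T, j, Finset.mem_erase, Finset.mem_filter, Finset.mem_product,
        Finset.mem_range, ne_eq, Prod.mk.injEq, swap_apply_def] at hp ⊢
      split_ifs <;> omega
    have hsxC : sx j C = C := by
      refine map_prod_eq_self_of_involutive _ (τ := fun p => (swap j (j + 1) p.1, p.2))
        (fun p => by simp) (fun ⟨a, b⟩ hp => ?_) (fun p _ => by simp)
      simp only [T, j, Finset.mem_erase, Finset.mem_filter, Finset.mem_product,
        Finset.mem_range, ne_eq, Prod.mk.injEq, swap_apply_def] at hp ⊢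
      split_ifs <;> omega
    have hv : D (w0 n * sN j) = C := by
      have hasc :
          ((w0 n * sN j : SPlus) : Perm ℕ) j < ((w0 n * sN j : SPlus) : Perm ℕ) (j + 1) := by
        simp only [Subgroup.coe_mul, coe_sN, Perm.mul_apply, swap_apply_left, swap_apply_right,
          w0_apply]
        split_ifs <;> omega
      have R := hD.X_sub_X_mul_of_lt hasc
      rw [mul_assoc, sN_mul_self, mul_one, hsplit, map_mul, hsxC] at R
      simp only [map_sub, sx_X_inl, sx_X_inr, swap_apply_left] at R
      exact mul_left_cancel₀ (X_inl_sub_X_inl_succ_ne_zero j) (by linear_combination R)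
    rw [if_pos (hdesc.2 hi), sN_mul_w0 hi, hv, hsplit, map_mul, hsaC]
    simp only [map_sub, sa_X_inl, sa_X_inr, swap_apply_left]
    ring
  · rw [if_neg (mt hdesc.1 hi), mul_zero, sub_eq_zero, hD.1 n, map_prod]
    refine Finset.prod_congr rfl fun p hp => ?_
    simp only [Finset.mem_filter, Finset.mem_product, Finset.mem_range] at hp
    rw [map_sub, sa_X_inl, sa_X_inr, swap_apply_of_ne_of_ne (by omega) (by omega)]

lemma sub_sa_of_mul_sN (hD : DoubleSchubertFamily' D) {w : SPlus} {i j : ℕ}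
    (h : (w : Perm ℕ) j < (w : Perm ℕ) (j + 1))
    (ih : D (w * sN j) - sa i (D (w * sN j)) =
      (X (Sum.inr i) - X (Sum.inr (i + 1))) * leftDivDiffValue D (w * sN j) i) :
    D w - sa i (D w) = (X (Sum.inr i) - X (Sum.inr (i + 1))) * leftDivDiffValue D w i := by
  have R := hD.X_sub_X_mul_of_lt h
  have Ra := congrArg (sa i) R
  have ihx := congrArg (sx j) ih
  simp only [map_mul, map_sub, sa_X_inl, sx_X_inr, sa_sx] at Ra ihx
  refine mul_left_cancel₀ (X_inl_sub_X_inl_succ_ne_zero j) ?_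
  linear_combination R - Ra + ih - ihx +
    (X (Sum.inr i) - X (Sum.inr (i + 1))) * hD.leftDivDiffValue_mul_sN (i := i) h

lemma sub_sa_of_fixedFrom (hD : DoubleSchubertFamily' D) {n : ℕ} {w : SPlus}
    (hw : FixedFrom w n) (i : ℕ) :
    D w - sa i (D w) = (X (Sum.inr i) - X (Sum.inr (i + 1))) * leftDivDiffValue D w i := by
  induction hk : n * n - lenS w using Nat.strong_induction_on generalizing w with
  | _ k ih =>
    obtain ⟨j, hj, hasc⟩ | rfl := exists_lt_succ_or_eq_w0 hw
    · have hwj : FixedFrom (w * sN j : SPlus) n := hw.mul_swap hj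
      have := lenS_mul_sN_of_lt hasc
      have := lenS_le_of_fixedFrom hwj
      exact hD.sub_sa_of_mul_sN hasc (ih _ (by omega) hwj rfl)
    · exact hD.sub_sa_w0 n i

end DoubleSchubertFamily'

/-- Left divided differences on double Schubert polynomials:
`A_i^a 𝔖_w(x; a) = -𝔖_{sᵢ w}(x; a)` if `ℓ(sᵢ w) < ℓ(w)`, and `A_i^a 𝔖_w = 0`
otherwise; expressed via `(a_i - a_{i+1}) · (-𝔖_{sᵢ w}) = 𝔖_w - sᵢᵃ 𝔖_w`
resp. `sᵢᵃ 𝔖_w = 𝔖_w`. -/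
theorem doubleSchubert_left_divided_difference
    (D : SPlus → DR) (hD : DoubleSchubertFamily' D) (w : SPlus) (i : ℕ) :
    if lenS (sN i * w) < lenS w then
      (X (Sum.inr i) - X (Sum.inr (i + 1))) * (- D (sN i * w)) = D w - sa i (D w)
    else sa i (D w) = D w := by
  obtain ⟨n, hn⟩ := exists_fixedFrom w
  have h := hD.sub_sa_of_fixedFrom hn i
  unfold leftDivDiffValue at h
  split_ifs at h ⊢
  · exact h.symm
  · rwa [mul_zero, sub_eq_zero, eq_comm] at h
end
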